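/- arXiv:1606.02386 — 5 statements merged into one kernel-verified Lean document; each statement's English description precedes it below -/
import Mathlib

section
/- For 0 ≤ s ≤ t < 1, conditionally on F_s, the increment a_t - a_s of the uniform counting process has a Binomial distribution with parameters n₀ - a_s and (t-s)/(1-s). -/
/-!
The σ-algebra `F_s` is contained in the one generated by the observations truncated at `s`
(values above `s` replaced by a sentinel), so it suffices to compare integrals over events of
that σ-algebra, fibre by fibre over `T = {i | U_i ≤ s}`. On such a fibre the truncated vector
only sees the coordinates in `T`, while the increment `a_t - a_s` counts the coordinates outside
`T` that fall in `(s, t]`. Independence of the two blocks factors every probability, and the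
coordinates outside `T`, all of which exceed `s`, land in `(s, t]` independently with
probability `(t - s) / (1 - s)`: this gives the binomial weight with `n₀ - |T|` trials.
-/

open MeasureTheory Set ProbabilityTheory

lemma choose_mul_pow_mul_pow_eq_of_ne_zero {a b c : ℝ} (hc : c ≠ 0) (n k : ℕ) :
    (n.choose k : ℝ) * a ^ k * b ^ (n - k)
      = n.choose k * (a / c) ^ k * (b / c) ^ (n - k) * c ^ n := by
  rcases le_or_gt k n with hkn | hkn
  · obtain ⟨j, rfl⟩ := Nat.exists_eq_add_of_le hkn
    rw [Nat.add_sub_cancel_left, div_pow, div_pow, pow_add]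
    field_simp
  · simp [Nat.choose_eq_zero_of_lt hkn]

lemma measurable_card_filter {Ω ι : Type*} {m : MeasurableSpace Ω} {p : ι → Ω → Prop}
    [∀ i ω, Decidable (p i ω)] (S : Finset ι) (hp : ∀ i ∈ S, MeasurableSet {ω | p i ω}) :
    Measurable fun ω => (S.filter fun i => p i ω).card := by
  simp_rw [Finset.card_filter]
  exact Finset.measurable_sum _ fun i hi => Measurable.ite (hp i hi) measurable_const
    measurable_const

section BinomialCount

variable {Ω β ι : Type*} {Y : ι → Ω → β} {A B : Set β} [DecidablePred (· ∈ A)]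

lemma filter_mem_eq_of_forall_mem_ite [DecidableEq ι] (hAB : Disjoint A B) {S J : Finset ι}
    (hJS : J ⊆ S) {ω : Ω} (hω : ∀ i ∈ S, Y i ω ∈ if i ∈ J then A else B) :
    (S.filter fun i => Y i ω ∈ A) = J := by
  ext i
  rw [Finset.mem_filter]
  refine ⟨fun ⟨hi, hA⟩ => ?_, fun hiJ => ⟨hJS hiJ, by simpa [hiJ] using hω i (hJS hiJ)⟩⟩
  by_contra hiJ
  exact hAB.notMem_of_mem_left hA (by simpa [hiJ] using hω i hi)

lemma setOf_forall_mem_union_card_filter_eq [DecidableEq ι] (hAB : Disjoint A B)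
    (S : Finset ι) (k : ℕ) :
    {ω | (∀ i ∈ S, Y i ω ∈ A ∪ B) ∧ (S.filter fun i => Y i ω ∈ A).card = k}
      = ⋃ J ∈ S.powersetCard k, ⋂ i ∈ S, Y i ⁻¹' (if i ∈ J then A else B) := by
  ext ω
  simp only [mem_ofPred_eq, mem_iUnion, mem_iInter, Finset.mem_powersetCard, mem_preimage,
    exists_prop]
  constructor
  · rintro ⟨hω, rfl⟩
    refine ⟨_, ⟨Finset.filter_subset _ _, rfl⟩, fun i hi => ?_⟩
    by_cases hA : Y i ω ∈ A
    · simp [hi, hA]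
    · simpa [hA] using hω i hi
  · rintro ⟨J, ⟨hJS, rfl⟩, hω⟩
    refine ⟨fun i hi => ?_, by rw [filter_mem_eq_of_forall_mem_ite hAB hJS hω]⟩
    have := hω i hi
    split_ifs at this
    exacts [Or.inl this, Or.inr this]

lemma measurableSet_forall_mem_union_card_filter_eq [DecidableEq ι] {m : MeasurableSpace Ω}
    (hAB : Disjoint A B) {S : Finset ι} (hA : ∀ i ∈ S, MeasurableSet[m] (Y i ⁻¹' A))
    (hB : ∀ i ∈ S, MeasurableSet[m] (Y i ⁻¹' B)) (k : ℕ) :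
    MeasurableSet[m]
      {ω | (∀ i ∈ S, Y i ω ∈ A ∪ B) ∧ (S.filter fun i => Y i ω ∈ A).card = k} := by
  rw [setOf_forall_mem_union_card_filter_eq hAB]
  exact Finset.measurableSet_biUnion _ fun J _ => Finset.measurableSet_biInter _ fun i hi => by
    split_ifs
    exacts [hA i hi, hB i hi]

lemma iIndepFun.measureReal_inter_preimage_eq_mul [MeasurableSpace Ω] [MeasurableSpace β]
    {μ : Measure Ω} (hY : iIndepFun Y μ) (S : Finset ι) {C : ι → Set β}
    (hC : ∀ i ∈ S, MeasurableSet (C i)) :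
    μ.real (⋂ i ∈ S, Y i ⁻¹' C i) = ∏ i ∈ S, μ.real (Y i ⁻¹' C i) := by
  rw [measureReal_def, hY.measure_inter_preimage_eq_mul S hC, ENNReal.toReal_prod]
  rfl

theorem iIndepFun.measureReal_forall_mem_union_card_filter_eq [DecidableEq ι]
    [MeasurableSpace Ω] [MeasurableSpace β] {μ : Measure Ω} [IsFiniteMeasure μ]
    (hY : iIndepFun Y μ) (hYm : ∀ i, Measurable (Y i)) (hA : MeasurableSet A)
    (hB : MeasurableSet B) (hAB : Disjoint A B) {p q : ℝ} {S : Finset ι}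
    (hp : ∀ i ∈ S, μ.real (Y i ⁻¹' A) = p) (hq : ∀ i ∈ S, μ.real (Y i ⁻¹' B) = q) (k : ℕ) :
    μ.real {ω | (∀ i ∈ S, Y i ω ∈ A ∪ B) ∧ (S.filter fun i => Y i ω ∈ A).card = k}
      = S.card.choose k * p ^ k * q ^ (S.card - k) := by
  have hmeas : ∀ J : Finset ι, ∀ i, MeasurableSet (if i ∈ J then A else B) := fun J i => by
    split_ifs <;> assumption
  have hpiece : ∀ J ∈ S.powersetCard k,
      μ.real (⋂ i ∈ S, Y i ⁻¹' (if i ∈ J then A else B)) = p ^ k * q ^ (S.card - k) := by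
    intro J hJ
    obtain ⟨hJS, rfl⟩ := Finset.mem_powersetCard.1 hJ
    calc μ.real (⋂ i ∈ S, Y i ⁻¹' (if i ∈ J then A else B))
        = ∏ i ∈ S, μ.real (Y i ⁻¹' (if i ∈ J then A else B)) :=
          iIndepFun.measureReal_inter_preimage_eq_mul hY S fun i _ => hmeas J i
      _ = ∏ i ∈ S, if i ∈ J then p else q :=
          Finset.prod_congr rfl fun i hi => by split_ifs; exacts [hp i hi, hq i hi]
      _ = p ^ J.card * q ^ (S.card - J.card) := by
          rw [Finset.prod_ite, Finset.prod_const, Finset.prod_const, Finset.filter_not,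
            Finset.filter_mem_eq_inter, Finset.inter_eq_right.2 hJS,
            Finset.card_sdiff_of_subset hJS]
  rw [setOf_forall_mem_union_card_filter_eq hAB, measureReal_biUnion_finset,
    Finset.sum_congr rfl hpiece, Finset.sum_const, Finset.card_powersetCard, nsmul_eq_mul,
    mul_assoc]
  · intro J₁ hJ₁ J₂ hJ₂ hne
    refine Set.disjoint_left.2 fun ω h₁ h₂ => hne ?_
    rw [Finset.mem_coe, Finset.mem_powersetCard] at hJ₁ hJ₂
    simp only [mem_iInter, mem_preimage] at h₁ h₂
    rw [← filter_mem_eq_of_forall_mem_ite hAB hJ₁.1 h₁,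
      filter_mem_eq_of_forall_mem_ite hAB hJ₂.1 h₂]
  · exact fun J _ => Finset.measurableSet_biInter _ fun i _ => hYm i (hmeas J i)

end BinomialCount

section Uniform

variable {Ω : Type*} [MeasurableSpace Ω] {μ : Measure Ω} {X : Ω → ℝ}

lemma measureReal_preimage_Ioc_of_map_eq_uniform (hX : Measurable X)
    (hunif : μ.map X = volume.restrict (Icc 0 1)) {a b : ℝ} (ha : 0 ≤ a) (hab : a ≤ b)
    (hb : b ≤ 1) : μ.real (X ⁻¹' Ioc a b) = b - a := by
  rw [measureReal_def, ← Measure.map_apply hX measurableSet_Ioc, hunif,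
    Measure.restrict_apply measurableSet_Ioc,
    inter_eq_left.2 (Ioc_subset_Icc_self.trans (Icc_subset_Icc ha hb)), Real.volume_Ioc,
    ENNReal.toReal_ofReal (sub_nonneg.2 hab)]

lemma measureReal_preimage_Ioi_of_map_eq_uniform (hX : Measurable X)
    (hunif : μ.map X = volume.restrict (Icc 0 1)) {a : ℝ} (ha : 0 ≤ a) (ha1 : a ≤ 1) :
    μ.real (X ⁻¹' Ioi a) = 1 - a := by
  have : Ioi a ∩ Icc 0 1 = Ioc a 1 := by
    ext x
    simp only [mem_inter_iff, mem_Ioi, mem_Icc, mem_Ioc]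
    exact ⟨fun h => ⟨h.1, h.2.2⟩, fun h => ⟨h.1, ha.trans h.1.le, h.2⟩⟩
  rw [measureReal_def, ← Measure.map_apply hX measurableSet_Ioi, hunif,
    Measure.restrict_apply measurableSet_Ioi, this, Real.volume_Ioc,
    ENNReal.toReal_ofReal (sub_nonneg.2 ha1)]

end Uniform

lemma Indep.measureReal_inter_eq_mul_of_measureReal_eq {Ω : Type*}
    {m₁ m₂ mΩ : MeasurableSpace Ω} {μ : Measure Ω} (hind : Indep m₁ m₂ μ) {P Q Q' : Set Ω}
    (hP : MeasurableSet[m₁] P) (hQ : MeasurableSet[m₂] Q) (hQ' : MeasurableSet[m₂] Q') {c : ℝ}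
    (hc : μ.real Q' = c * μ.real Q) : μ.real (P ∩ Q') = c * μ.real (P ∩ Q) := by
  simp only [measureReal_def, (Indep_iff _ _ _).1 hind _ _ hP hQ,
    (Indep_iff _ _ _).1 hind _ _ hP hQ', ENNReal.toReal_mul] at hc ⊢
  rw [hc]
  ring

lemma measureReal_eq_sum_inter_preimage_singleton {Ω α : Type*} [Fintype α]
    [MeasurableSpace Ω] {μ : Measure Ω} [IsFiniteMeasure μ] {X : Ω → α}
    (hX : ∀ x, MeasurableSet (X ⁻¹' {x})) (C : Set Ω) : μ.real C = ∑ x, μ.real (C ∩ X ⁻¹' {x}) := by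
  rw [← measureReal_restrict_apply_univ, ← preimage_univ (f := X), ← Finset.coe_univ,
    ← sum_measureReal_preimage_singleton _ fun x _ => hX x]
  simp only [measureReal_restrict_apply (hX _), inter_comm]

lemma setIntegral_comp_eq_sum {Ω α : Type*} [Fintype α] [MeasurableSpace Ω]
    {μ : Measure Ω} [IsFiniteMeasure μ] {X : Ω → α} (hX : ∀ x, MeasurableSet (X ⁻¹' {x}))
    (h : α → ℝ) (A : Set Ω) : ∫ ω in A, h (X ω) ∂μ = ∑ x, h x * μ.real (A ∩ X ⁻¹' {x}) := by
  have hsum : (fun ω => h (X ω)) = fun ω => ∑ x, (X ⁻¹' {x}).indicator (fun _ => h x) ω := by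
    funext ω
    rw [Finset.sum_eq_single (X ω)
      (fun x _ hx => indicator_of_notMem (fun h' => hx h'.symm) _) (by simp),
      indicator_of_mem (s := X ⁻¹' {X ω}) rfl]
  rw [hsum, integral_finsetSum _ fun x _ => (integrable_const _).indicator (hX x)]
  refine Finset.sum_congr rfl fun x _ => ?_
  rw [integral_indicator_const _ (hX x), measureReal_restrict_apply (hX x), smul_eq_mul,
    mul_comm, inter_comm]

theorem condExp_indicator_ae_eq_of_measureReal_inter_fiber {Ω α : Type*} [Fintype α]
    {m m₀ : MeasurableSpace Ω} {μ : Measure Ω} [IsFiniteMeasure μ] (hm : m ≤ m₀)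
    {X : Ω → α} (hX : ∀ x, MeasurableSet (X ⁻¹' {x})) {h : α → ℝ}
    (hhX : StronglyMeasurable[m] fun ω => h (X ω)) {E : Set Ω} (hE : MeasurableSet E)
    (hfiber : ∀ A, MeasurableSet[m] A → ∀ x,
      μ.real (A ∩ X ⁻¹' {x} ∩ E) = h x * μ.real (A ∩ X ⁻¹' {x})) :
    μ[E.indicator 1 | m] =ᵐ[μ] fun ω => h (X ω) := by
  have hint : Integrable (fun ω => h (X ω)) μ :=
    (integrable_const (∑ x, ‖h x‖)).mono' (hhX.mono hm).aestronglyMeasurable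
      (ae_of_all _ fun ω => Finset.single_le_sum (f := fun x => ‖h x‖)
        (fun _ _ => norm_nonneg _) (Finset.mem_univ (X ω)))
  refine (ae_eq_condExp_of_forall_setIntegral_eq hm ((integrable_const 1).indicator hE)
    (fun _ _ _ => hint.integrableOn) (fun A hA _ => ?_) hhX.aestronglyMeasurable).symm
  rw [setIntegral_comp_eq_sum hX, integral_indicator_one hE, measureReal_restrict_apply hE,
    measureReal_eq_sum_inter_preimage_singleton hX]
  exact Finset.sum_congr rfl fun x _ => by rw [← hfiber A hA x, inter_right_comm, inter_comm E]

section CountingProcess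

variable {Ω ι : Type*} [Fintype ι] (U : ι → Ω → ℝ)

noncomputable def lowSet (s : ℝ) (ω : Ω) : Finset ι := Finset.univ.filter fun i => U i ω ≤ s

noncomputable def observedUpTo (s : ℝ) (ω : Ω) (i : ι) : ℝ :=
  if U i ω ≤ s then U i ω else s + 1

variable {U}

lemma lowSet_eq_filter_observedUpTo {u s : ℝ} (hus : u ≤ s) (ω : Ω) :
    lowSet U u ω = Finset.univ.filter fun i => observedUpTo U s ω i ≤ u := by
  ext i
  rw [lowSet, Finset.mem_filter, Finset.mem_filter, observedUpTo]
  simp only [Finset.mem_univ, true_and]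
  split_ifs with h
  · rfl
  · exact iff_of_false (fun h' => h (h'.trans hus)) (by linarith)

lemma card_lowSet_sub_card_lowSet [DecidableEq ι] {s t : ℝ} (hst : s ≤ t) (ω : Ω) :
    (lowSet U t ω).card - (lowSet U s ω).card
      = (Finset.univ.filter fun i => U i ω ∈ Ioc s t).card := by
  have hsub : lowSet U s ω ⊆ lowSet U t ω := fun i hi => by
    simp only [lowSet, Finset.mem_filter] at hi ⊢
    exact ⟨hi.1, hi.2.trans hst⟩
  rw [← Finset.card_sdiff_of_subset hsub]
  congr 1
  ext i
  simp [lowSet, and_comm]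

lemma preimage_lowSet_singleton [DecidableEq ι] (s : ℝ) (T : Finset ι) :
    lowSet U s ⁻¹' {T} = (⋂ i ∈ T, U i ⁻¹' Iic s) ∩ ⋂ i ∈ Tᶜ, U i ⁻¹' Ioi s := by
  ext ω
  simp only [mem_preimage, mem_singleton_iff, mem_inter_iff, mem_iInter, Finset.mem_compl,
    mem_Iic, mem_Ioi, Finset.ext_iff, lowSet, Finset.mem_filter, Finset.mem_univ, true_and]
  constructor
  · intro h
    exact ⟨fun i hi => (h i).2 hi, fun i hi => lt_of_not_ge fun h' => hi ((h i).1 h')⟩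
  · rintro ⟨h₁, h₂⟩ i
    exact ⟨fun h => by_contra fun hi => (h₂ i hi).not_ge h, h₁ i⟩

lemma observedUpTo_preimage_inter_preimage_lowSet [DecidableEq ι] (s : ℝ) (T : Finset ι)
    (B : Set (ι → ℝ)) :
    observedUpTo U s ⁻¹' B ∩ lowSet U s ⁻¹' {T}
      = (fun ω i => if i ∈ T then U i ω else s + 1) ⁻¹' B ∩ lowSet U s ⁻¹' {T} := by
  ext ω
  refine and_congr_left fun (hω : lowSet U s ω = T) => ?_
  subst hω
  simp only [lowSet, Finset.mem_filter, Finset.mem_univ, true_and]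
  rfl

lemma preimage_lowSet_singleton_inter_card_filter_Ioc [DecidableEq ι] {s t : ℝ} (hst : s ≤ t)
    (T : Finset ι) (k : ℕ) :
    lowSet U s ⁻¹' {T} ∩ {ω | (Finset.univ.filter fun i => U i ω ∈ Ioc s t).card = k}
      = (⋂ i ∈ T, U i ⁻¹' Iic s) ∩ {ω | (∀ i ∈ Tᶜ, U i ω ∈ Ioc s t ∪ Ioi t)
          ∧ (Tᶜ.filter fun i => U i ω ∈ Ioc s t).card = k} := by
  ext ω
  rw [preimage_lowSet_singleton, Ioc_union_Ioi_eq_Ioi hst]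
  simp only [mem_inter_iff, mem_iInter, mem_preimage, mem_ofPred_eq, mem_Iic]
  refine ⟨fun ⟨⟨hT, hTc⟩, hk⟩ => ⟨hT, hTc, ?_⟩, fun ⟨hT, hTc, hk⟩ => ⟨⟨hT, hTc⟩, ?_⟩⟩
  all_goals
    convert hk using 2
    ext i
    by_cases hi : i ∈ T
    · simp [hi, (hT i hi).not_gt]
    · simp [hi]

lemma measurableSet_preimage_lowSet_singleton [DecidableEq ι] [MeasurableSpace Ω]
    (hmeas : ∀ i, Measurable (U i)) (s : ℝ) (T : Finset ι) :
    MeasurableSet (lowSet U s ⁻¹' {T}) := by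
  rw [preimage_lowSet_singleton]
  exact (Finset.measurableSet_biInter _ fun i _ => hmeas i measurableSet_Iic).inter
    (Finset.measurableSet_biInter _ fun i _ => hmeas i measurableSet_Ioi)

lemma measurable_card_lowSet_of_le {u s : ℝ} (hus : u ≤ s) :
    Measurable[MeasurableSpace.comap (observedUpTo U s) inferInstance]
      fun ω => (lowSet U u ω).card := by
  simp_rw [lowSet_eq_filter_observedUpTo hus]
  exact (measurable_card_filter _ fun i _ =>
    measurableSet_le (measurable_pi_apply i) measurable_const).comp (comap_measurable _)

theorem measureReal_observedUpTo_preimage_inter_lowSet_inter [DecidableEq ι]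
    [MeasurableSpace Ω] {μ : Measure Ω} [IsProbabilityMeasure μ] (hmeas : ∀ i, Measurable (U i))
    (hiid : iIndepFun U μ) (hunif : ∀ i, μ.map (U i) = volume.restrict (Icc 0 1)) {s t : ℝ}
    (hs : 0 ≤ s) (hst : s ≤ t) (ht : t < 1) {B : Set (ι → ℝ)} (hB : MeasurableSet B)
    (T : Finset ι) (k : ℕ) :
    μ.real (observedUpTo U s ⁻¹' B ∩ lowSet U s ⁻¹' {T}
        ∩ {ω | (Finset.univ.filter fun i => U i ω ∈ Ioc s t).card = k})
      = (Tᶜ.card.choose k : ℝ) * ((t - s) / (1 - s)) ^ k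
          * (1 - (t - s) / (1 - s)) ^ (Tᶜ.card - k)
          * μ.real (observedUpTo U s ⁻¹' B ∩ lowSet U s ⁻¹' {T}) := by
  set 𝒢 : Finset ι → MeasurableSpace Ω :=
    fun S => ⨆ i ∈ (S : Set ι), MeasurableSpace.comap (U i) inferInstance
  have hind : Indep (𝒢 T) (𝒢 Tᶜ) μ :=
    indep_iSup_of_disjoint (fun i => (hmeas i).comap_le) ((iIndepFun_iff_iIndep _ _ _).1 hiid)
      (by rw [Finset.coe_compl]; exact disjoint_compl_right)
  have hU : ∀ S : Finset ι, ∀ i ∈ S, Measurable[𝒢 S] (U i) := fun S i hi =>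
    Measurable.of_comap_le (le_iSup₂ (f := fun j (_ : j ∈ (S : Set ι)) =>
      MeasurableSpace.comap (U j) inferInstance) i hi)
  have hV : Measurable[𝒢 T] fun ω i => if i ∈ T then U i ω else s + 1 :=
    (@measurable_pi_iff Ω ι (fun _ => ℝ) (𝒢 T) _ _).2 fun i => by
      by_cases hi : i ∈ T
      · simpa [hi] using hU T i hi
      · simp [hi]
  have hs1 : 0 < 1 - s := by linarith
  have hq : 1 - (t - s) / (1 - s) = (1 - t) / (1 - s) := by
    field_simp
    ring
  rw [observedUpTo_preimage_inter_preimage_lowSet, inter_assoc,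
    preimage_lowSet_singleton_inter_card_filter_Ioc hst, preimage_lowSet_singleton,
    ← inter_assoc, ← inter_assoc]
  -- Both events are now `P ∩ _` with `P` depending on the coordinates in `T` only, and the
  -- second factor on those in `Tᶜ` only.
  refine Indep.measureReal_inter_eq_mul_of_measureReal_eq hind
    ((hV hB).inter (Finset.measurableSet_biInter _ fun i hi => hU T i hi measurableSet_Iic))
    (Finset.measurableSet_biInter _ fun i hi => hU _ i hi measurableSet_Ioi) ?_ ?_
  · exact measurableSet_forall_mem_union_card_filter_eq Ioc_disjoint_Ioi_same
      (fun i hi => hU _ i hi measurableSet_Ioc) (fun i hi => hU _ i hi measurableSet_Ioi) k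
  · rw [iIndepFun.measureReal_forall_mem_union_card_filter_eq hiid hmeas measurableSet_Ioc
        measurableSet_Ioi Ioc_disjoint_Ioi_same
        (fun i _ => measureReal_preimage_Ioc_of_map_eq_uniform (hmeas i) (hunif i) hs hst ht.le)
        (fun i _ => measureReal_preimage_Ioi_of_map_eq_uniform (hmeas i) (hunif i)
          (hs.trans hst) ht.le),
      iIndepFun.measureReal_inter_preimage_eq_mul hiid _ fun _ _ => measurableSet_Ioi,
      Finset.prod_congr rfl fun i _ => measureReal_preimage_Ioi_of_map_eq_uniform (hmeas i)
        (hunif i) hs (hst.trans ht.le),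
      Finset.prod_const, hq, choose_mul_pow_mul_pow_eq_of_ne_zero hs1.ne']

end CountingProcess

/-- For `0 ≤ s ≤ t < 1`, conditionally on `F_s = σ(a_u, u ≤ s)`, the
increment `a_t - a_s` of the uniform counting process has a Binomial distribution with
parameters `n₀ - a_s` and `(t-s)/(1-s)`: for every `k`, the conditional probability of
`{a_t - a_s = k}` given `F_s` equals `C(n₀ - a_s, k) p^k (1-p)^{n₀ - a_s - k}` with
`p = (t-s)/(1-s)`. -/
theorem increment_cond_binomial
    {Ω : Type*} [m0 : MeasurableSpace Ω] (μ : Measure Ω) [IsProbabilityMeasure μ]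
    (n₀ : ℕ) (U : Fin n₀ → Ω → ℝ)
    (hmeas : ∀ i, Measurable (U i))
    (hiid : iIndepFun U μ)
    (hunif : ∀ i, Measure.map (U i) μ = volume.restrict (Set.Icc (0:ℝ) 1))
    (a : ℝ → Ω → ℕ)
    (ha : ∀ t ω, a t ω = (Finset.univ.filter (fun i => U i ω ≤ t)).card)
    (F : ℝ → MeasurableSpace Ω)
    (hF : ∀ s, F s = ⨆ u ∈ Set.Iic s, MeasurableSpace.comap (a u) inferInstance)
    (hFle : ∀ s, F s ≤ m0)
    (s t : ℝ) (hs : 0 ≤ s) (hst : s ≤ t) (ht : t < 1) (k : ℕ) :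
    μ[(fun ω => if a t ω - a s ω = k then (1:ℝ) else 0) | F s]
      =ᵐ[μ] fun ω =>
        ((n₀ - a s ω).choose k : ℝ) * ((t - s) / (1 - s)) ^ k
          * (1 - (t - s) / (1 - s)) ^ (n₀ - a s ω - k) := by
  set φ : ℕ → ℝ := fun m => ((n₀ - m).choose k : ℝ) * ((t - s) / (1 - s)) ^ k
    * (1 - (t - s) / (1 - s)) ^ (n₀ - m - k)
  have ha' : ∀ u, a u = fun ω => (lowSet U u ω).card := fun u => funext (ha u)
  have haF : Measurable[F s] (a s) := by
    rw [hF]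
    exact Measurable.of_comap_le (le_iSup₂ (f := fun u (_ : u ∈ Iic s) =>
      MeasurableSpace.comap (a u) inferInstance) s (mem_Iic.2 le_rfl))
  have hFV : F s ≤ MeasurableSpace.comap (observedUpTo U s) inferInstance := by
    rw [hF]
    exact iSup₂_le fun u hu => (ha' u ▸ measurable_card_lowSet_of_le hu).comap_le
  have hindicator : (fun ω => if a t ω - a s ω = k then (1:ℝ) else 0)
      = {ω | (Finset.univ.filter fun i => U i ω ∈ Ioc s t).card = k}.indicator 1 := by
    funext ω
    simp only [indicator, mem_ofPred_eq, Pi.one_apply, ha, ← card_lowSet_sub_card_lowSet hst]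
    rfl
  rw [hindicator]
  refine (condExp_indicator_ae_eq_of_measureReal_inter_fiber (hFle s)
    (measurableSet_preimage_lowSet_singleton hmeas s) (h := fun T => φ T.card) ?_
    (measurable_card_filter _ (fun i _ => hmeas i measurableSet_Ioc) (measurableSet_singleton k))
    fun A hA T => ?_).trans (ae_of_all _ fun ω => (congrArg φ (ha s ω)).symm)
  · rw [show (fun ω => φ (lowSet U s ω).card) = φ ∘ a s by rw [ha' s]; rfl]
    exact (measurable_from_nat.comp haF).stronglyMeasurable
  · obtain ⟨B, hB, rfl⟩ := hFV A hA
    refine (measureReal_observedUpTo_preimage_inter_lowSet_inter hmeas hiid hunif hs hst ht hB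
      T k).trans ?_
    rw [Finset.card_compl, Fintype.card_fin]
end

section
/- Let a_t be the counting process of n₀ i.i.d. Uniform[0,1] random variables, â_t = a_t - n₀ t, g an arbitrary deterministic function, and τ = inf{t : â_t ≤ g(t)}. Then E[â_τ / τ] ≤ 0. -/
/-!
Write the stopping rule as `a_t ≤ b t` with `b t = g t + n₀ t`. Where `τ > 0`,
`â_τ / τ + n₀ = ∑ᵢ 1{Uᵢ ≤ τ} / τ`, so it suffices that each summand has expectation at most `1`.
Freeze all coordinates except `Uᵢ = v` and view `τ` as a function of `v`. Lowering `Uᵢ` from `v`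
only raises the path, and only before time `v`; so if `v ≤ τ(v)` the stopping time does not
move. Hence `τ` takes a single value `s` on `{v | v ≤ τ(v)} ⊆ [0, s]`, and the summand integrates
in `v` to at most `P(Uᵢ ≤ s) / s = 1`; Fubini over the other coordinates finishes the proof.

Fubini needs `τ` to be measurable. Between consecutive order statistics the count is a constant
`k`, so `τ` is the minimum over `k` of the first point of `{t | k ≤ b t}` in the `k`-th window:
a monotone function of the window's left end, cut off at its right end.
-/

open MeasureTheory Set ProbabilityTheory
open scoped ENNReal

theorem csInf_biUnion_union_singleton {α ι : Type*} [ConditionallyCompleteLinearOrder α]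
    {s : Finset ι} (hs : s.Nonempty) {B : ι → Set α} (hB : ∀ i ∈ s, BddBelow (B i))
    (c : α) :
    sInf ((⋃ i ∈ s, B i) ∪ {c}) = s.inf' hs fun i => sInf (B i ∪ {c}) := by
  have hbdd : BddBelow ((⋃ i ∈ s, B i) ∪ {c}) :=
    (s.finite_toSet.bddBelow_biUnion.2 hB).union bddBelow_singleton
  refine le_antisymm (Finset.le_inf' _ _ fun i hi => ?_) (le_csInf ⟨c, Or.inr rfl⟩ ?_)
  · exact csInf_le_csInf hbdd ⟨c, Or.inr rfl⟩
      (union_subset_union_left _ (subset_biUnion_of_mem (u := B) hi))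
  · rintro t (ht | rfl)
    · obtain ⟨i, hi, ht⟩ := mem_iUnion₂.1 ht
      exact (Finset.inf'_le _ hi).trans
        (csInf_le ((hB i hi).union bddBelow_singleton) (Or.inl ht))
    · obtain ⟨i, hi⟩ := hs
      exact (Finset.inf'_le _ hi).trans
        (csInf_le ((hB i hi).union bddBelow_singleton) (Or.inr rfl))

theorem csInf_inter_Ico_union_singleton {α : Type*} [ConditionallyCompleteLinearOrder α]
    (A : Set α) (c x y : α) :
    sInf (A ∩ Ico x y ∪ {c}) =
      if sInf (A ∩ Ici x ∪ {c}) < y then sInf (A ∩ Ici x ∪ {c}) else c := by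
  set φ := sInf (A ∩ Ici x ∪ {c})
  have hbdd : BddBelow (A ∩ Ici x ∪ {c}) :=
    (bddBelow_Ici.mono inter_subset_right).union bddBelow_singleton
  have hsub : A ∩ Ico x y ∪ {c} ⊆ A ∩ Ici x ∪ {c} :=
    union_subset_union_left _ (inter_subset_inter_right _ Ico_subset_Ici_self)
  split_ifs with hφ
  · refine le_antisymm (not_lt.1 fun hlt => ?_)
      (csInf_le_csInf hbdd ⟨c, Or.inr rfl⟩ hsub)
    obtain ⟨a, ha, hay⟩ := exists_lt_of_csInf_lt ⟨c, Or.inr rfl⟩ (lt_min hlt hφ)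
    have ha' : a ∈ A ∩ Ico x y ∪ {c} := by
      rcases ha with ⟨haA, hax⟩ | rfl
      · exact Or.inl ⟨haA, hax, hay.trans_le (min_le_right _ _)⟩
      · exact Or.inr rfl
    exact (csInf_le (hbdd.mono hsub) ha').not_gt (hay.trans_le (min_le_left _ _))
  · have hempty : A ∩ Ico x y = ∅ := by
      refine eq_empty_of_forall_notMem fun a ⟨haA, hax, hay⟩ => hφ ?_
      exact (csInf_le hbdd (Or.inl ⟨haA, hax⟩)).trans_lt hay
    rw [hempty, empty_union, csInf_singleton]

theorem Measurable.csInf_inter_Ico_union_singleton {α : Type*} [MeasurableSpace α]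
    {f g : α → ℝ} (hf : Measurable f) (hg : Measurable g) (A : Set ℝ) (c : ℝ) :
    Measurable fun x => sInf (A ∩ Ico (f x) (g x) ∪ {c}) := by
  have hmono : Monotone fun x => sInf (A ∩ Ici x ∪ {c}) := fun x x' hx =>
    csInf_le_csInf ((bddBelow_Ici.mono inter_subset_right).union bddBelow_singleton)
      ⟨c, Or.inr rfl⟩
      (union_subset_union_left _ (inter_subset_inter_right _ (Ici_subset_Ici.2 hx)))
  simp_rw [_root_.csInf_inter_Ico_union_singleton]
  have hφ := hmono.measurable.comp hf
  exact Measurable.ite (measurableSet_lt hφ hg) hφ measurable_const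

theorem lintegral_pi_le_of_lintegral_update_le {ι : Type*} [Fintype ι] [DecidableEq ι]
    {X : ι → Type*} [∀ i, MeasurableSpace (X i)] {μ : ∀ i, Measure (X i)}
    [∀ i, IsProbabilityMeasure (μ i)] {f : (∀ i, X i) → ℝ≥0∞} (hf : Measurable f)
    (i : ι) {C : ℝ≥0∞} (h : ∀ x, ∫⁻ v, f (Function.update x i v) ∂μ i ≤ C) :
    ∫⁻ x, f x ∂Measure.pi μ ≤ C := by
  rcases isEmpty_or_nonempty (∀ i, X i) with hX | ⟨⟨x⟩⟩
  · simp [lintegral_of_isEmpty]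
  rw [lintegral_eq_lmarginal_univ x, lmarginal_erase' f hf (Finset.mem_univ i)]
  refine (lmarginal_mono (s := Finset.univ.erase i) h x).trans ?_
  simp [lmarginal]

namespace CountingProcess

variable {ι : Type*} [Fintype ι]

noncomputable def count (u : ι → ℝ) (t : ℝ) : ℕ :=
  (Finset.univ.filter fun i => u i ≤ t).card

theorem count_mono (u : ι → ℝ) : Monotone (count u) := fun _ _ h =>
  Finset.card_le_card <| Finset.monotone_filter_right _ fun _ _ hi => hi.trans h

theorem count_le_card (u : ι → ℝ) (t : ℝ) : count u t ≤ Fintype.card ι :=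
  Finset.card_filter_le _ _

theorem measurable_count (t : ℝ) : Measurable fun u : ι → ℝ => count u t := by
  simp_rw [count, Finset.card_filter]
  exact Finset.measurable_sum _ fun i _ =>
    Measurable.ite (measurableSet_le (measurable_pi_apply i) measurable_const)
      measurable_const measurable_const

theorem isClosed_setOf_le_count (u : ι → ℝ) (k : ℕ) : IsClosed {t | k ≤ count u t} := by
  have : {t | k ≤ count u t} =
      ⋃ s : {s : Finset ι // k ≤ s.card}, ⋂ i ∈ s.1, Ici (u i) := by
    ext t
    simp only [mem_ofPred_eq, mem_iUnion, mem_iInter, mem_Ici]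
    constructor
    · exact fun h => ⟨⟨_, h⟩, fun i hi => (Finset.mem_filter.1 hi).2⟩
    · rintro ⟨⟨s, hs⟩, h⟩
      exact hs.trans <| Finset.card_le_card fun i hi =>
        Finset.mem_filter.2 ⟨Finset.mem_univ _, h i hi⟩
  rw [this]
  exact isClosed_iUnion_of_finite fun s => isClosed_biInter fun i _ => isClosed_Ici

theorem count_update_eq [DecidableEq ι] (x : ι → ℝ) (i : ι) {v v' t : ℝ} (hv : v ≤ t)
    (hv' : v' ≤ t) : count (Function.update x i v) t = count (Function.update x i v') t := by
  unfold count
  congr 1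
  refine Finset.filter_congr fun j _ => ?_
  rcases eq_or_ne j i with rfl | hj
  · simp [hv, hv']
  · simp [Function.update_of_ne hj]

/-- The `k`-th smallest coordinate of `u`, clamped to `[0, 2]`; the clamping makes `k = 0` and
`k = card ι + 1` behave like `-∞` and `+∞` for times in `[0, 1]`. -/
noncomputable def jumpTime (k : ℕ) (u : ι → ℝ) : ℝ :=
  sInf ({t ∈ Icc 0 2 | k ≤ count u t} ∪ {2})

theorem bddBelow_jumpTime_set (k : ℕ) (u : ι → ℝ) :
    BddBelow ({t ∈ Icc (0 : ℝ) 2 | k ≤ count u t} ∪ {2}) :=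
  ⟨0, by rintro t (ht | rfl) <;> [exact ht.1.1; norm_num]⟩

theorem jumpTime_nonneg (k : ℕ) (u : ι → ℝ) : 0 ≤ jumpTime k u :=
  le_csInf ⟨2, Or.inr rfl⟩ (by rintro t (ht | rfl) <;> [exact ht.1.1; norm_num])

theorem jumpTime_le_two (k : ℕ) (u : ι → ℝ) : jumpTime k u ≤ 2 :=
  csInf_le (bddBelow_jumpTime_set k u) (Or.inr rfl)

theorem jumpTime_le_iff {k : ℕ} {u : ι → ℝ} {t : ℝ} (ht : t ∈ Ico 0 2) :
    jumpTime k u ≤ t ↔ k ≤ count u t := by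
  refine ⟨fun h => ?_, fun h =>
    csInf_le (bddBelow_jumpTime_set k u) (Or.inl ⟨Ico_subset_Icc_self ht, h⟩)⟩
  have hclosed : IsClosed ({t ∈ Icc (0 : ℝ) 2 | k ≤ count u t} ∪ {2}) :=
    (isClosed_Icc.inter (isClosed_setOf_le_count u k)).union isClosed_singleton
  rcases hclosed.csInf_mem ⟨2, Or.inr rfl⟩ (bddBelow_jumpTime_set k u) with ⟨-, hk⟩ | h2
  · exact hk.trans (count_mono u h)
  · exact absurd (h2 ▸ h : (2 : ℝ) ≤ t) (not_le.2 ht.2)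

theorem measurable_jumpTime (k : ℕ) : Measurable (jumpTime (ι := ι) k) := by
  refine measurable_of_Iic fun s => ?_
  rcases lt_or_ge s 0 with hs | hs
  · convert MeasurableSet.empty
    exact eq_empty_of_forall_notMem fun u hu => hs.not_ge ((jumpTime_nonneg k u).trans hu)
  rcases lt_or_ge s 2 with hs2 | hs2
  · convert measurableSet_le measurable_const (measurable_count s) using 1
    ext u
    exact jumpTime_le_iff ⟨hs, hs2⟩
  · convert MeasurableSet.univ
    exact eq_univ_of_forall fun u => (jumpTime_le_two k u).trans hs2

theorem count_eq_iff {k : ℕ} {u : ι → ℝ} {t : ℝ} (ht : t ∈ Ico 0 2) :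
    count u t = k ↔ t ∈ Ico (jumpTime k u) (jumpTime (k + 1) u) := by
  rw [mem_Ico, jumpTime_le_iff ht, ← not_le, jumpTime_le_iff ht]
  omega

variable (b : ℝ → ℝ)

def hitSet (u : ι → ℝ) : Set ℝ := {t ∈ Ioc 0 1 | (count u t : ℝ) ≤ b t} ∪ {1}

noncomputable def hitTime (u : ι → ℝ) : ℝ := sInf (hitSet b u)

def levelSet (k : ℕ) : Set ℝ := {t ∈ Ioc 0 1 | (k : ℝ) ≤ b t}

theorem hitSet_eq_biUnion (u : ι → ℝ) :
    hitSet b u = (⋃ k ∈ Finset.range (Fintype.card ι + 1),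
      levelSet b k ∩ Ico (jumpTime k u) (jumpTime (k + 1) u)) ∪ {1} := by
  have hIco {t : ℝ} (ht : t ∈ Ioc 0 1) : t ∈ Ico (0 : ℝ) 2 :=
    ⟨ht.1.le, ht.2.trans_lt one_lt_two⟩
  ext t
  simp only [hitSet, levelSet, mem_union, mem_ofPred_eq, mem_iUnion₂, mem_inter_iff,
    Finset.mem_range]
  refine or_congr_left ⟨fun ⟨ht, hb⟩ => ?_, fun ⟨k, _, ⟨ht, hb⟩, hk⟩ => ?_⟩
  · exact ⟨count u t, Nat.lt_succ_of_le (count_le_card u t), ⟨ht, hb⟩,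
      (count_eq_iff (hIco ht)).1 rfl⟩
  · exact ⟨ht, by rwa [(count_eq_iff (hIco ht)).2 hk]⟩

theorem hitTime_eq_inf' (u : ι → ℝ) :
    hitTime b u = (Finset.range (Fintype.card ι + 1)).inf' Finset.nonempty_range_add_one
      fun k => sInf (levelSet b k ∩ Ico (jumpTime k u) (jumpTime (k + 1) u) ∪ {1}) := by
  rw [hitTime, hitSet_eq_biUnion]
  exact csInf_biUnion_union_singleton _ (fun k _ => bddBelow_Ico.mono inter_subset_right) _

theorem measurable_hitTime : Measurable (hitTime (ι := ι) b) := by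
  rw [funext (hitTime_eq_inf' b), ← funext (Finset.inf'_apply _ _)]
  exact Finset.inf'_induction _ _ (p := Measurable) (fun _ hf _ hg => hf.inf hg) fun k _ =>
    (measurable_jumpTime k).csInf_inter_Ico_union_singleton (measurable_jumpTime (k + 1)) _ 1

theorem bddBelow_hitSet (u : ι → ℝ) : BddBelow (hitSet b u) :=
  ⟨0, by rintro t (ht | rfl) <;> [exact ht.1.1.le; norm_num]⟩

theorem hitTime_antitone : Antitone (hitTime (ι := ι) b) := fun _ u' huu' =>
  csInf_le_csInf (bddBelow_hitSet b u') ⟨1, Or.inr rfl⟩ <| union_subset_union_left _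
    fun _ ⟨ht, hb⟩ => ⟨ht, le_trans (Nat.cast_le.2 <| Finset.card_le_card <|
      Finset.monotone_filter_right _ fun i _ hi => (huu' i).trans hi) hb⟩

theorem hitTime_update_eq [DecidableEq ι] {x : ι → ℝ} {i : ι} {v v' : ℝ} (hv' : v' ≤ v)
    (hv : v ≤ hitTime b (Function.update x i v)) :
    hitTime b (Function.update x i v') = hitTime b (Function.update x i v) := by
  refine le_antisymm (csInf_le_csInf (bddBelow_hitSet b _) ⟨1, Or.inr rfl⟩ ?_)
    (hitTime_antitone b (Function.update_mono hv'))
  rintro t (⟨ht, hb⟩ | rfl)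
  · have hvt : v ≤ t := hv.trans (csInf_le (bddBelow_hitSet b _) (Or.inl ⟨ht, hb⟩))
    exact Or.inl ⟨ht, by rwa [count_update_eq x i (hv'.trans hvt) hvt]⟩
  · exact Or.inr rfl

noncomputable def hitTerm (i : ι) (u : ι → ℝ) : ℝ≥0∞ :=
  if u i ≤ hitTime b u then ENNReal.ofReal (hitTime b u)⁻¹ else 0

theorem measurable_hitTerm (i : ι) : Measurable (hitTerm b i) :=
  Measurable.ite (measurableSet_le (measurable_pi_apply i) (measurable_hitTime b))
    (ENNReal.measurable_ofReal.comp (measurable_hitTime b).inv) measurable_const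

theorem sum_hitTerm (u : ι → ℝ) :
    ∑ i, hitTerm b i u = ENNReal.ofReal (count u (hitTime b u) / hitTime b u) := by
  rw [div_eq_mul_inv, ENNReal.ofReal_mul (Nat.cast_nonneg _), ENNReal.ofReal_natCast]
  simp only [hitTerm, count]
  rw [Finset.sum_ite, Finset.sum_const_zero, add_zero, Finset.sum_const, nsmul_eq_mul]

theorem lintegral_hitTerm_update_le_one [DecidableEq ι] {ν : Measure ℝ}
    (hν : ∀ t, ν (Iic t) ≤ ENNReal.ofReal t) (x : ι → ℝ) (i : ι) :
    ∫⁻ v, hitTerm b i (Function.update x i v) ∂ν ≤ 1 := by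
  simp only [hitTerm, Function.update_self]
  by_cases h : ∃ v₁, 0 < v₁ ∧ v₁ ≤ hitTime b (Function.update x i v₁)
  · obtain ⟨v₁, hv₁, hv₁T⟩ := h
    set s := hitTime b (Function.update x i v₁)
    have hs : 0 < s := hv₁.trans_le hv₁T
    have hconst : ∀ v, v ≤ hitTime b (Function.update x i v) →
        hitTime b (Function.update x i v) = s := fun v hv =>
      (le_total v v₁).elim (fun h => hitTime_update_eq b h hv₁T)
        (fun h => (hitTime_update_eq b h hv).symm)
    calc _ ≤ ∫⁻ v, (Iic s).indicator (fun _ => ENNReal.ofReal s⁻¹) v ∂ν := by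
          refine lintegral_mono fun v => ?_
          split_ifs with hv
          · rw [hconst v hv, indicator_of_mem (hconst v hv ▸ hv : v ∈ Iic s)]
          · exact zero_le
      _ = ENNReal.ofReal s⁻¹ * ν (Iic s) := lintegral_indicator_const measurableSet_Iic _
      _ ≤ ENNReal.ofReal s⁻¹ * ENNReal.ofReal s := by gcongr; exact hν s
      _ = 1 := by
        rw [← ENNReal.ofReal_mul (inv_nonneg.2 hs.le), inv_mul_cancel₀ hs.ne',
          ENNReal.ofReal_one]
  · push Not at h
    have hpos : ∀ᵐ v ∂ν, 0 < v := by
      have hν0 : ν (Iic 0) = 0 := by simpa using hν 0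
      exact measure_mono_null (fun v (hv : ¬ 0 < v) => (not_lt.1 hv : v ∈ Iic 0)) hν0
    calc _ = ∫⁻ _, 0 ∂ν :=
          lintegral_congr_ae (hpos.mono fun v hv => if_neg (not_le.2 (h v hv)))
      _ ≤ 1 := by simp

theorem lintegral_count_hitTime_div_le {Ω : Type*} [MeasurableSpace Ω] {μ : Measure Ω}
    {V : Ω → ι → ℝ} (hV : Measurable V) {ν : Measure ℝ} [IsProbabilityMeasure ν]
    (hlaw : μ.map V = Measure.pi fun _ => ν) (hν : ∀ t, ν (Iic t) ≤ ENNReal.ofReal t) :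
    ∫⁻ ω, ENNReal.ofReal (count (V ω) (hitTime b (V ω)) / hitTime b (V ω)) ∂μ ≤
      Fintype.card ι := by
  classical
  simp_rw [← sum_hitTerm]
  rw [← lintegral_map (Finset.measurable_sum _ fun i _ => measurable_hitTerm b i) hV, hlaw,
    lintegral_finsetSum _ fun i _ => measurable_hitTerm b i]
  calc _ ≤ ∑ _i : ι, (1 : ℝ≥0∞) := Finset.sum_le_sum fun i _ =>
        lintegral_pi_le_of_lintegral_update_le (measurable_hitTerm b i) i
          (lintegral_hitTerm_update_le_one b hν · i)
    _ = Fintype.card ι := by simp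

end CountingProcess

theorem integral_sub_const_nonpos_of_lintegral_ofReal_le {α : Type*} [MeasurableSpace α]
    {μ : Measure α} [IsProbabilityMeasure μ] {f : α → ℝ} (hf : 0 ≤ᵐ[μ] f) {c : ℝ} (hc : 0 ≤ c)
    (h : ∫⁻ x, ENNReal.ofReal (f x) ∂μ ≤ ENNReal.ofReal c) : ∫ x, (f x - c) ∂μ ≤ 0 := by
  by_cases hfi : Integrable f μ
  · rw [integral_sub hfi (integrable_const c), integral_const, probReal_univ, one_smul,
      sub_nonpos, ← ENNReal.ofReal_le_ofReal_iff hc, ofReal_integral_eq_lintegral_ofReal hfi hf]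
    exact h
  · have hfi' : ¬Integrable (fun x => f x - c) μ := fun h' =>
      hfi (by simpa [sub_eq_add_neg, integrable_add_const_iff] using h')
    rw [integral_undef hfi']

theorem volume_restrict_Icc_Iic_le (t : ℝ) :
    volume.restrict (Icc (0 : ℝ) 1) (Iic t) ≤ ENNReal.ofReal t := by
  rw [Measure.restrict_apply measurableSet_Iic]
  calc _ ≤ volume (Icc 0 t) := measure_mono fun x hx => ⟨hx.2.1, hx.1⟩
    _ = ENNReal.ofReal t := by rw [Real.volume_Icc, sub_zero]

theorem expectation_stopped_ratio_nonpos_general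
    {Ω : Type*} [m0 : MeasurableSpace Ω] (μ : Measure Ω) [IsProbabilityMeasure μ]
    (n₀ : ℕ) (U : Fin n₀ → Ω → ℝ)
    (hmeas : ∀ i, Measurable (U i))
    (hiid : iIndepFun U μ)
    (hunif : ∀ i, Measure.map (U i) μ = volume.restrict (Set.Icc (0:ℝ) 1))
    (a : ℝ → Ω → ℕ)
    (ha : ∀ t ω, a t ω = (Finset.univ.filter (fun i => U i ω ≤ t)).card)
    (g : ℝ → ℝ)
    (τ : Ω → ℝ)
    (hτ : ∀ ω, τ ω
      = sInf ({t ∈ Set.Ioc (0:ℝ) 1 | (a t ω : ℝ) - n₀ * t ≤ g t} ∪ {1}))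
    (hτpos : ∀ᵐ ω ∂μ, 0 < τ ω) :
    ∫ ω, ((a (τ ω) ω : ℝ) - n₀ * τ ω) / τ ω ∂μ ≤ 0 := by
  open CountingProcess in
  set V : Ω → Fin n₀ → ℝ := fun ω i => U i ω
  set b : ℝ → ℝ := fun t => g t + n₀ * t
  set X : Ω → ℝ := fun ω => count (V ω) (hitTime b (V ω)) / hitTime b (V ω)
  have hτV : ∀ ω, τ ω = hitTime b (V ω) := fun ω => by
    simp only [hτ, ha, sub_le_iff_le_add]; rfl
  have hratio :
      (fun ω => ((a (τ ω) ω : ℝ) - n₀ * τ ω) / τ ω) =ᵐ[μ] fun ω => X ω - n₀ :=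
    hτpos.mono fun ω hω => by
      simp only [X, ← hτV, ha, sub_div, mul_div_cancel_right₀ _ hω.ne']; rfl
  have hX0 : 0 ≤ᵐ[μ] X :=
    hτpos.mono fun ω hω => div_nonneg (Nat.cast_nonneg _) (hτV ω ▸ hω.le)
  have hlaw : μ.map V = Measure.pi fun _ => volume.restrict (Icc 0 1) := by
    rw [hiid.map_fun_eq_pi_map fun i => (hmeas i).aemeasurable]
    simp_rw [hunif]
  have : IsProbabilityMeasure (volume.restrict (Icc (0 : ℝ) 1)) := ⟨by simp⟩
  rw [integral_congr_ae hratio]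
  refine integral_sub_const_nonpos_of_lintegral_ofReal_le hX0 (Nat.cast_nonneg _) ?_
  simpa using lintegral_count_hitTime_div_le b (measurable_pi_lambda _ hmeas) hlaw
    volume_restrict_Icc_Iic_le

/-- For the counting process `a_t` of `n₀` i.i.d. Uniform[0,1] random
variables, `â_t = a_t - n₀ t`, an arbitrary deterministic function `g` with `g 0 ≥ 0`,
and the stopping time `τ = inf{t ∈ (0,1] : â_t ≤ g t}` (with `inf ∅ = 1`, so that
`τ > 0`), one has `E[â_τ / τ] ≤ 0`. -/
theorem expectation_stopped_ratio_nonpos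
    {Ω : Type*} [m0 : MeasurableSpace Ω] (μ : Measure Ω) [IsProbabilityMeasure μ]
    (n₀ : ℕ) (U : Fin n₀ → Ω → ℝ)
    (hmeas : ∀ i, Measurable (U i))
    (hiid : iIndepFun U μ)
    (hunif : ∀ i, Measure.map (U i) μ = volume.restrict (Set.Icc (0:ℝ) 1))
    (a : ℝ → Ω → ℕ)
    (ha : ∀ t ω, a t ω = (Finset.univ.filter (fun i => U i ω ≤ t)).card)
    (g : ℝ → ℝ) (hg0 : 0 ≤ g 0)
    (τ : Ω → ℝ)
    (hτ : ∀ ω, τ ω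
      = sInf ({t ∈ Set.Ioc (0:ℝ) 1 | (a t ω : ℝ) - n₀ * t ≤ g t} ∪ {1}))
    (hτpos : ∀ᵐ ω ∂μ, 0 < τ ω) :
    ∫ ω, ((a (τ ω) ω : ℝ) - n₀ * τ ω) / τ ω ∂μ ≤ 0 :=
  expectation_stopped_ratio_nonpos_general (m0 := m0) μ n₀ U hmeas hiid hunif a ha g τ hτ hτpos
end

section
/- Under independence of null p-values from all other p-values, the step-down Benjamini–Hochberg procedure with threshold τ_sd = inf{t : r_t ≤ nt/q} controls the FDR: E[a_{τ_sd}/(r_{τ_sd} ∨ 1)] ≤ (n₀/n) q ≤ q, where a_t and r_t count null and total p-values at most t. -/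
/-!
The threshold is attained on the grid `q k / n`: snapping an admissible `t` down to `q r_t / n`
keeps it admissible, so `τ = q k / n` with `k ≤ r_τ`. Resetting a null p-value `p_i ≤ τ` to `0`
does not move the threshold, hence `1{p_i ≤ τ} / (r_τ ∨ 1) ≤ 1{p_i ≤ q K_i / n} / K_i`, where
`K_i ≥ 1` is the grid index of the threshold computed with `p_i` replaced by `0`. As `K_i` is a
function of the other p-values, it is independent of the uniform `p_i`, so the right-hand side has
expectation at most `q / n`; summing over the `n₀` nulls gives the bound.
-/

open MeasureTheory Set ProbabilityTheory

open scoped Finset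

namespace StepDownBH

variable {n : ℕ} {q t : ℝ} (y : Fin n → ℝ)

noncomputable def count (y : Fin n → ℝ) (t : ℝ) : ℕ := #{j | y j ≤ t}

def belowLine (q : ℝ) (y : Fin n → ℝ) : Set ℝ := {t ∈ Icc 0 1 | (count y t : ℝ) ≤ n * t / q}

noncomputable def threshold (q : ℝ) (y : Fin n → ℝ) : ℝ := sInf (belowLine q y)

noncomputable def thresholdIndex (q : ℝ) (y : Fin n → ℝ) : ℕ :=
  sInf {k : ℕ | q * k / n ∈ belowLine q y}

lemma count_le_card : count y t ≤ n :=
  (Finset.card_filter_le _ _).trans_eq (Finset.card_fin n)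

lemma count_mono : Monotone (count y) :=
  fun _ _ hst => Finset.card_le_card <| Finset.monotone_filter_right _ fun _ _ hj => hj.trans hst

@[fun_prop]
lemma measurable_count (t : ℝ) : Measurable fun y : Fin n → ℝ => count y t := by
  simp_rw [count, Finset.card_filter]
  exact Finset.measurable_sum _ fun j _ =>
    Measurable.ite (measurableSet_le (measurable_pi_apply j) measurable_const)
      measurable_const measurable_const

lemma filter_update_zero (i : Fin n) (ht : 0 ≤ t) :
    Finset.univ.filter (fun j => Function.update y i 0 j ≤ t) =
      insert i (Finset.univ.filter fun j => y j ≤ t) := by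
  ext j
  rcases eq_or_ne j i with rfl | hji <;> simp [*]

lemma count_update_zero_of_le {i : Fin n} (ht : 0 ≤ t) (hi : y i ≤ t) :
    count (Function.update y i 0) t = count y t := by
  rw [count, filter_update_zero y i ht, Finset.insert_eq_of_mem (by simpa using hi), count]

lemma count_le_count_update_zero (i : Fin n) (ht : 0 ≤ t) :
    count y t ≤ count (Function.update y i 0) t := by
  rw [count, count, filter_update_zero y i ht]
  exact Finset.card_le_card (Finset.subset_insert _ _)

lemma self_mem_belowLine (hq₀ : 0 < q) (hq₁ : q ≤ 1) : q ∈ belowLine q y := by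
  refine ⟨⟨hq₀.le, hq₁⟩, ?_⟩
  rw [mul_div_cancel_right₀ _ hq₀.ne']
  exact_mod_cast count_le_card y

lemma mul_count_div_le (hq₀ : 0 < q) (ht : t ∈ belowLine q y) : q * count y t / n ≤ t := by
  refine div_le_of_le_mul₀ n.cast_nonneg ht.1.1 ?_
  rw [mul_comm t]
  exact (le_div_iff₀' hq₀).mp ht.2

lemma mul_count_div_mem_belowLine (hq₀ : 0 < q) (ht : t ∈ belowLine q y) :
    q * count y t / n ∈ belowLine q y := by
  have hle := mul_count_div_le y hq₀ ht
  refine ⟨⟨by positivity, hle.trans ht.1.2⟩, ?_⟩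
  calc (count y (q * count y t / n) : ℝ) ≤ count y t := by exact_mod_cast count_mono y hle
    _ ≤ n * (q * count y t / n) / q := by
      obtain rfl | hn := n.eq_zero_or_pos
      · simp [count]
      · rw [mul_div_cancel₀ _ (by positivity), mul_div_cancel_left₀ _ hq₀.ne']

lemma nonempty_setOf_mul_div_mem_belowLine (hq₀ : 0 < q) (hq₁ : q ≤ 1) :
    {k : ℕ | q * k / n ∈ belowLine q y}.Nonempty :=
  ⟨_, mul_count_div_mem_belowLine y hq₀ (self_mem_belowLine y hq₀ hq₁)⟩

lemma thresholdIndex_mem (hq₀ : 0 < q) (hq₁ : q ≤ 1) :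
    q * thresholdIndex q y / n ∈ belowLine q y :=
  Nat.sInf_mem (nonempty_setOf_mul_div_mem_belowLine y hq₀ hq₁)

lemma thresholdIndex_le_count (hq₀ : 0 < q) (ht : t ∈ belowLine q y) :
    thresholdIndex q y ≤ count y t :=
  Nat.sInf_le (mul_count_div_mem_belowLine y hq₀ ht)

lemma thresholdIndex_le_card (hq₀ : 0 < q) (hq₁ : q ≤ 1) : thresholdIndex q y ≤ n :=
  (thresholdIndex_le_count y hq₀ (self_mem_belowLine y hq₀ hq₁)).trans (count_le_card y)

lemma isLeast_belowLine (hq₀ : 0 < q) (hq₁ : q ≤ 1) :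
    IsLeast (belowLine q y) (q * thresholdIndex q y / n) := by
  refine ⟨thresholdIndex_mem y hq₀ hq₁, fun t ht => le_trans ?_ (mul_count_div_le y hq₀ ht)⟩
  gcongr
  exact_mod_cast thresholdIndex_le_count y hq₀ ht

lemma threshold_eq (hq₀ : 0 < q) (hq₁ : q ≤ 1) : threshold q y = q * thresholdIndex q y / n :=
  (isLeast_belowLine y hq₀ hq₁).csInf_eq

lemma threshold_mem (hq₀ : 0 < q) (hq₁ : q ≤ 1) : threshold q y ∈ belowLine q y :=
  threshold_eq y hq₀ hq₁ ▸ thresholdIndex_mem y hq₀ hq₁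

lemma measurable_thresholdIndex (hq₀ : 0 < q) (hq₁ : q ≤ 1) :
    Measurable (thresholdIndex q : (Fin n → ℝ) → ℕ) := by
  classical
  have h : thresholdIndex q =
      fun y : Fin n → ℝ => Nat.find (nonempty_setOf_mul_div_mem_belowLine y hq₀ hq₁) :=
    funext fun y => Nat.sInf_def _
  rw [h]
  exact measurable_find _ fun k =>
    (MeasurableSet.const _).inter (measurableSet_le (by fun_prop :
      Measurable fun y : Fin n → ℝ => (count y (q * k / n) : ℝ)) measurable_const)

lemma belowLine_update_zero_subset (i : Fin n) :
    belowLine q (Function.update y i 0) ⊆ belowLine q y :=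
  fun _ ht => ⟨ht.1, le_trans (by exact_mod_cast count_le_count_update_zero y i ht.1.1) ht.2⟩

lemma thresholdIndex_update_zero (hq₀ : 0 < q) (hq₁ : q ≤ 1) {i : Fin n}
    (hi : y i ≤ threshold q y) :
    thresholdIndex q (Function.update y i 0) = thresholdIndex q y := by
  have hmem := threshold_mem y hq₀ hq₁
  refine le_antisymm (Nat.sInf_le ?_) (Nat.sInf_le (belowLine_update_zero_subset y i
    (thresholdIndex_mem _ hq₀ hq₁)))
  change q * thresholdIndex q y / n ∈ belowLine q (Function.update y i 0)
  rw [← threshold_eq y hq₀ hq₁]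
  exact ⟨hmem.1, by rw [count_update_zero_of_le y hmem.1.1 hi]; exact hmem.2⟩

lemma one_le_thresholdIndex_update_zero (hq₀ : 0 < q) (hq₁ : q ≤ 1) (i : Fin n) :
    1 ≤ thresholdIndex q (Function.update y i 0) := by
  by_contra! h
  have hmem := thresholdIndex_mem (Function.update y i 0) hq₀ hq₁
  rw [Nat.lt_one_iff.mp h, Nat.cast_zero, mul_zero, zero_div] at hmem
  have hpos : 0 < count (Function.update y i 0) 0 := by
    rw [count, filter_update_zero y i le_rfl]
    exact Finset.card_pos.mpr ⟨i, Finset.mem_insert_self _ _⟩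
  have hzero := hmem.2
  rw [mul_zero, zero_div, Nat.cast_nonpos] at hzero
  omega

lemma ite_div_max_count_le (hq₀ : 0 < q) (hq₁ : q ≤ 1) (i : Fin n) :
    (if y i ≤ threshold q y then (1 : ℝ) else 0) / (max (count y (threshold q y)) 1 : ℕ) ≤
      if y i ≤ q / n * thresholdIndex q (Function.update y i 0) then
        (thresholdIndex q (Function.update y i 0) : ℝ)⁻¹ else 0 := by
  have hK := one_le_thresholdIndex_update_zero y hq₀ hq₁ i
  split_ifs with hi hK' hK'
  · rw [one_div]
    gcongr
    rw [thresholdIndex_update_zero y hq₀ hq₁ hi]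
    exact le_max_of_le_left (thresholdIndex_le_count y hq₀ (threshold_mem y hq₀ hq₁))
  · rw [thresholdIndex_update_zero y hq₀ hq₁ hi, div_mul_eq_mul_div,
      ← threshold_eq y hq₀ hq₁] at hK'
    exact absurd hi hK'
  all_goals simp

lemma fdp_le_sum (hq₀ : 0 < q) (hq₁ : q ≤ 1) (nulls : Finset (Fin n)) :
    (#{i ∈ nulls | y i ≤ threshold q y} : ℝ) / (max (count y (threshold q y)) 1 : ℕ) ≤
      ∑ i ∈ nulls, if y i ≤ q / n * thresholdIndex q (Function.update y i 0) then
        (thresholdIndex q (Function.update y i 0) : ℝ)⁻¹ else 0 := by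
  rw [Finset.natCast_card_filter, Finset.sum_div]
  exact Finset.sum_le_sum fun i _ => ite_div_max_count_le y hq₀ hq₁ i

end StepDownBH

namespace ProbabilityTheory

variable {Ω : Type*} {m₀ : MeasurableSpace Ω} {μ : Measure Ω}

lemma integrable_ite_le_mul_inv [IsFiniteMeasure μ] {U : Ω → ℝ} {K : Ω → ℕ} (hU : Measurable U)
    (hK : Measurable K) (c : ℝ) :
    Integrable (fun ω => if U ω ≤ c * K ω then (K ω : ℝ)⁻¹ else 0) μ := by
  refine Integrable.of_bound (Measurable.ite (measurableSet_le hU (by fun_prop)) (by fun_prop)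
    measurable_const).aestronglyMeasurable 1 (ae_of_all _ fun ω => ?_)
  split_ifs <;> simp [Nat.cast_inv_le_one]

lemma measureReal_preimage_Iic_le_of_map_eq {U : Ω → ℝ} (hU : Measurable U)
    (hunif : μ.map U = volume.restrict (Icc 0 1)) {x : ℝ} (hx : 0 ≤ x) :
    μ.real (U ⁻¹' Iic x) ≤ x := by
  rw [measureReal_def, ← Measure.map_apply hU measurableSet_Iic, hunif,
    Measure.restrict_apply measurableSet_Iic]
  calc (volume (Iic x ∩ Icc 0 1)).toReal ≤ (volume (Icc 0 x)).toReal :=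
        ENNReal.toReal_mono measure_Icc_lt_top.ne
          (measure_mono fun y hy => ⟨hy.2.1, hy.1⟩)
    _ = x := by rw [Real.volume_Icc, sub_zero, ENNReal.toReal_ofReal hx]

variable [IsProbabilityMeasure μ]

lemma indep_sup_right_of_indep_sup_left {m₁ m₂ m₃ : MeasurableSpace Ω} (h₁ : m₁ ≤ m₀)
    (h₂ : m₂ ≤ m₀) (h₃ : m₃ ≤ m₀) (h₁₂ : Indep m₁ m₂ μ) (h₁₂₃ : Indep (m₁ ⊔ m₂) m₃ μ) :
    Indep m₁ (m₂ ⊔ m₃) μ := by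
  let π : Set (Set Ω) :=
    {s | ∃ s₂, MeasurableSet[m₂] s₂ ∧ ∃ s₃, MeasurableSet[m₃] s₃ ∧ s = s₂ ∩ s₃}
  have hπ : IsPiSystem π := by
    rintro _ ⟨s₂, hs₂, s₃, hs₃, rfl⟩ _ ⟨t₂, ht₂, t₃, ht₃, rfl⟩ -
    exact ⟨s₂ ∩ t₂, hs₂.inter ht₂, s₃ ∩ t₃, hs₃.inter ht₃, Set.inter_inter_inter_comm _ _ _ _⟩
  have hgen : m₂ ⊔ m₃ = MeasurableSpace.generateFrom π := by
    refine le_antisymm (sup_le (fun s hs => ?_) fun s hs => ?_) ?_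
    · exact MeasurableSpace.measurableSet_generateFrom ⟨s, hs, univ, .univ, (inter_univ s).symm⟩
    · exact MeasurableSpace.measurableSet_generateFrom ⟨univ, .univ, s, hs, (univ_inter s).symm⟩
    · refine MeasurableSpace.generateFrom_le ?_
      rintro _ ⟨s₂, hs₂, s₃, hs₃, rfl⟩
      exact (le_sup_left (b := m₃) _ hs₂).inter (le_sup_right (a := m₂) _ hs₃)
  refine IndepSets.indep h₁ (sup_le h₂ h₃) (@MeasurableSpace.isPiSystem_measurableSet Ω m₁) hπ
    (@MeasurableSpace.generateFrom_measurableSet Ω m₁).symm hgen ?_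
  rw [IndepSets_iff]
  rintro s _ hs ⟨s₂, hs₂, s₃, hs₃, rfl⟩
  rw [Indep_iff] at h₁₂ h₁₂₃
  rw [← inter_assoc,
    h₁₂₃ _ _ ((le_sup_left (b := m₂) _ hs).inter (le_sup_right (a := m₁) _ hs₂)) hs₃,
    h₁₂ _ _ hs hs₂, h₁₂₃ _ _ (le_sup_right (a := m₁) _ hs₂) hs₃, mul_assoc]

lemma IndepFun.prodMk_right_of_indepFun_prodMk {β γ δ : Type*} [MeasurableSpace β]
    [MeasurableSpace γ] [MeasurableSpace δ] {X : Ω → β} {Y : Ω → γ} {Z : Ω → δ}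
    (hX : Measurable X) (hY : Measurable Y) (hZ : Measurable Z) (hXY : IndepFun X Y μ)
    (hXYZ : IndepFun (fun ω => (X ω, Y ω)) Z μ) : IndepFun X (fun ω => (Y ω, Z ω)) μ := by
  rw [IndepFun_iff_Indep] at *
  rw [Prod.instMeasurableSpace, MeasurableSpace.comap_prodMk] at hXYZ ⊢
  exact indep_sup_right_of_indep_sup_left hX.comap_le hY.comap_le hZ.comap_le hXY hXYZ

lemma integral_ite_le_mul_inv_le {U : Ω → ℝ} {K : Ω → ℕ} (hU : Measurable U) (hK : Measurable K)
    (hUK : IndepFun U K μ) (hvalid : ∀ x, 0 ≤ x → μ.real (U ⁻¹' Iic x) ≤ x) {c : ℝ} (hc : 0 ≤ c)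
    {N : ℕ} (hKN : ∀ ω, K ω ≤ N) :
    ∫ ω, (if U ω ≤ c * K ω then (K ω : ℝ)⁻¹ else 0) ∂μ ≤ c := by
  classical
  let A (k : ℕ) : Set Ω := K ⁻¹' {k} ∩ U ⁻¹' Iic (c * k)
  have hA (k : ℕ) : MeasurableSet (A k) :=
    (hK (measurableSet_singleton k)).inter (hU measurableSet_Iic)
  have hsplit : (fun ω => if U ω ≤ c * K ω then (K ω : ℝ)⁻¹ else 0) =
      fun ω => ∑ k ∈ Finset.range (N + 1), (A k).indicator (fun _ => (k : ℝ)⁻¹) ω := by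
    funext ω
    simp [A, indicator_apply, ite_and, hKN]
  -- By independence, on `{K = k}` the event `U ≤ c k` has probability at most `c k`,
  -- which cancels the weight `1 / k`.
  have hterm (k : ℕ) :
      μ.real (K ⁻¹' {k} ∩ U ⁻¹' Iic (c * k)) * (k : ℝ)⁻¹ ≤ c * μ.real (K ⁻¹' {k}) := by
    have hU_le : μ.real (U ⁻¹' Iic (c * k)) * (k : ℝ)⁻¹ ≤ c := by
      rcases k.eq_zero_or_pos with rfl | hk
      · simpa using hc
      · calc μ.real (U ⁻¹' Iic (c * k)) * (k : ℝ)⁻¹ ≤ c * k * (k : ℝ)⁻¹ := by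
              gcongr; exact hvalid _ (by positivity)
          _ = c := by field_simp
    rw [measureReal_def, hUK.symm.measure_inter_preimage_eq_mul _ _ (measurableSet_singleton k)
      measurableSet_Iic, ENNReal.toReal_mul, ← measureReal_def, ← measureReal_def, mul_assoc]
    exact (mul_le_mul_of_nonneg_left hU_le measureReal_nonneg).trans_eq (mul_comm _ _)
  rw [hsplit, integral_finsetSum _ fun k _ => (integrable_const _).indicator (hA k)]
  calc ∑ k ∈ Finset.range (N + 1), ∫ ω, (A k).indicator (fun _ => (k : ℝ)⁻¹) ω ∂μ
      ≤ ∑ k ∈ Finset.range (N + 1), c * μ.real (K ⁻¹' {k}) := by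
        refine Finset.sum_le_sum fun k _ => ?_
        rw [integral_indicator_const _ (hA k), smul_eq_mul]
        exact hterm k
    _ = c * μ.real (K ⁻¹' ↑(Finset.range (N + 1))) := by
        rw [← Finset.mul_sum, sum_measureReal_preimage_singleton _ fun k _ =>
          hK (measurableSet_singleton k)]
    _ ≤ c := mul_le_of_le_one_right hc measureReal_le_one

end ProbabilityTheory

lemma StepDownBH.indepFun_update_zero {Ω : Type*} [MeasurableSpace Ω] {μ : Measure Ω}
    [IsProbabilityMeasure μ] {n : ℕ} {nulls : Finset (Fin n)} {p : Fin n → Ω → ℝ}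
    (hmeas : ∀ i, Measurable (p i)) (hiid : iIndepFun (fun i : {i // i ∈ nulls} => p i) μ)
    (hindep : IndepFun (fun ω (i : {i // i ∈ nulls}) => p i ω)
      (fun ω (j : {j // j ∉ nulls}) => p j ω) μ) {i : Fin n} (hi : i ∈ nulls) :
    IndepFun (p i) (fun ω => Function.update (fun j => p j ω) i 0) μ := by
  classical
  let i₀ : {i // i ∈ nulls} := ⟨i, hi⟩
  let Y (ω : Ω) (j : ({i₀}ᶜ : Finset {i // i ∈ nulls})) : ℝ := p j ω
  let Z (ω : Ω) (j : {j // j ∉ nulls}) : ℝ := p j ω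
  have hXY : IndepFun (p i) Y μ := by
    exact (hiid.indepFun_finset {i₀} {i₀}ᶜ disjoint_compl_right fun j => hmeas j).comp
      (measurable_pi_apply ⟨i₀, Finset.mem_singleton_self i₀⟩) measurable_id
  have hXYZ : IndepFun (fun ω => (p i ω, Y ω)) Z μ := by
    exact hindep.comp (φ := fun v => (v i₀, fun j : ({i₀}ᶜ : Finset _) => v j)) (by fun_prop)
      measurable_id
  let G (v : ({i₀}ᶜ : Finset {i // i ∈ nulls}) → ℝ) (w : {j // j ∉ nulls} → ℝ) (j : Fin n) : ℝ :=
    if hji : j = i then 0 else if hj : j ∈ nulls then v ⟨⟨j, hj⟩, by simpa [i₀] using hji⟩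
      else w ⟨j, hj⟩
  have hG : Measurable fun vw : _ × _ => G vw.1 vw.2 :=
    measurable_pi_lambda _ fun j => by
      simp only [G]
      split_ifs <;> fun_prop
  have hupd : (fun ω => Function.update (fun j => p j ω) i 0) = fun ω => G (Y ω) (Z ω) := by
    funext ω j
    simp only [G, Function.update_apply]
    split_ifs <;> rfl
  rw [hupd]
  exact (hXY.prodMk_right_of_indepFun_prodMk (hmeas i) (by fun_prop) (by fun_prop) hXYZ).comp
    measurable_id hG

theorem stepdown_BH_FDR_control_general
    {Ω : Type*} [m0 : MeasurableSpace Ω] (μ : Measure Ω) [IsProbabilityMeasure μ]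
    (n n₀ : ℕ)
    (nulls : Finset (Fin n)) (hcard : nulls.card = n₀)
    (p : Fin n → Ω → ℝ) (hmeas : ∀ i, Measurable (p i))
    (hiid : iIndepFun (fun i : {i // i ∈ nulls} => p i) μ)
    (hunif : ∀ i ∈ nulls, Measure.map (p i) μ = volume.restrict (Set.Icc (0:ℝ) 1))
    (hindep : IndepFun (fun ω (i : {i // i ∈ nulls}) => p i ω)
      (fun ω (j : {j // j ∉ nulls}) => p j ω) μ)
    (q : ℝ) (hq : q ∈ Set.Ioo (0:ℝ) 1)
    (a r : ℝ → Ω → ℕ)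
    (ha : ∀ t ω, a t ω = (nulls.filter (fun i => p i ω ≤ t)).card)
    (hr : ∀ t ω, r t ω = (Finset.univ.filter (fun i : Fin n => p i ω ≤ t)).card)
    (τ : Ω → ℝ)
    (hτ : ∀ ω, τ ω = sInf {t ∈ Set.Icc (0:ℝ) 1 | (r t ω : ℝ) ≤ n * t / q}) :
    ∫ ω, (a (τ ω) ω : ℝ) / (max (r (τ ω) ω) 1 : ℕ) ∂μ ≤ (n₀ / n : ℝ) * q
      ∧ (n₀ / n : ℝ) * q ≤ q := by
  open StepDownBH in
  have hq₀ : 0 < q := hq.1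
  have hq₁ : q ≤ 1 := hq.2.le
  let K (i : Fin n) (ω : Ω) : ℕ := thresholdIndex q (Function.update (fun j => p j ω) i 0)
  let g (i : Fin n) (ω : Ω) : ℝ := if p i ω ≤ q / n * K i ω then (K i ω : ℝ)⁻¹ else 0
  have hK (i : Fin n) : Measurable (K i) := (measurable_thresholdIndex hq₀ hq₁).comp (by fun_prop)
  have hg (i : Fin n) : Integrable (g i) μ := integrable_ite_le_mul_inv (hmeas i) (hK i) _
  have hfdp (ω : Ω) : (a (τ ω) ω : ℝ) / (max (r (τ ω) ω) 1 : ℕ) ≤ ∑ i ∈ nulls, g i ω := by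
    have hτω : τ ω = threshold q (fun j => p j ω) := by simp only [hτ, hr]; rfl
    rw [ha, hr, hτω]
    exact fdp_le_sum _ hq₀ hq₁ nulls
  refine ⟨?_, mul_le_of_le_one_left hq₀.le (div_le_one_of_le₀ ?_ n.cast_nonneg)⟩
  · calc ∫ ω, (a (τ ω) ω : ℝ) / (max (r (τ ω) ω) 1 : ℕ) ∂μ
        ≤ ∫ ω, ∑ i ∈ nulls, g i ω ∂μ :=
          integral_mono_of_nonneg (ae_of_all _ fun ω => by positivity)
            (integrable_finsetSum _ fun i _ => hg i) (ae_of_all _ hfdp)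
      _ = ∑ i ∈ nulls, ∫ ω, g i ω ∂μ := integral_finsetSum _ fun i _ => hg i
      _ ≤ ∑ _i ∈ nulls, q / n := Finset.sum_le_sum fun i hi =>
          integral_ite_le_mul_inv_le (hmeas i) (hK i)
            ((indepFun_update_zero hmeas hiid hindep hi).comp measurable_id
              (measurable_thresholdIndex hq₀ hq₁))
            (fun _ => measureReal_preimage_Iic_le_of_map_eq (hmeas i) (hunif i hi))
            (by positivity) fun ω => thresholdIndex_le_card _ hq₀ hq₁
      _ = n₀ / n * q := by rw [Finset.sum_const, hcard, nsmul_eq_mul]; ring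
  · rw [← hcard]
    exact_mod_cast (Finset.card_le_univ nulls).trans_eq (Fintype.card_fin n)

/-- Step-down Benjamini–Hochberg FDR control. Null p-values are i.i.d.
Uniform[0,1], independent of the non-null p-values. With `a_t`, `b_t`, `r_t = a_t + b_t`
counting null, non-null and all p-values at most `t`, and threshold
`τ_sd = inf{t : r_t ≤ n t / q}`, the step-down BH procedure satisfies
`E[a_{τ_sd} / (r_{τ_sd} ∨ 1)] ≤ (n₀/n) q ≤ q`. -/
theorem stepdown_BH_FDR_control
    {Ω : Type*} [m0 : MeasurableSpace Ω] (μ : Measure Ω) [IsProbabilityMeasure μ]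
    (n n₀ : ℕ) (hn : 0 < n)
    (nulls : Finset (Fin n)) (hcard : nulls.card = n₀)
    (p : Fin n → Ω → ℝ) (hmeas : ∀ i, Measurable (p i))
    (hiid : iIndepFun (fun i : {i // i ∈ nulls} => p i) μ)
    (hunif : ∀ i ∈ nulls, Measure.map (p i) μ = volume.restrict (Set.Icc (0:ℝ) 1))
    (hindep : IndepFun (fun ω (i : {i // i ∈ nulls}) => p i ω)
      (fun ω (j : {j // j ∉ nulls}) => p j ω) μ)
    (q : ℝ) (hq : q ∈ Set.Ioo (0:ℝ) 1)
    (a r : ℝ → Ω → ℕ)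
    (ha : ∀ t ω, a t ω = (nulls.filter (fun i => p i ω ≤ t)).card)
    (hr : ∀ t ω, r t ω = (Finset.univ.filter (fun i : Fin n => p i ω ≤ t)).card)
    (τ : Ω → ℝ)
    (hτ : ∀ ω, τ ω = sInf {t ∈ Set.Icc (0:ℝ) 1 | (r t ω : ℝ) ≤ n * t / q}) :
    ∫ ω, (a (τ ω) ω : ℝ) / (max (r (τ ω) ω) 1 : ℕ) ∂μ ≤ (n₀ / n : ℝ) * q
      ∧ (n₀ / n : ℝ) * q ≤ q :=
  stepdown_BH_FDR_control_general (m0 := m0) μ n n₀ nulls hcard p hmeas hiid hunif hindep q hq a r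
    ha hr τ hτ
end

section
/- Let a(R_t) count null z-values in the nested stopping sets R_t with F₀(R_t) = t. Then η_t = a(R_t) − ∫₀^t (n₀ − a(R_s))/(1−s) ds is a martingale with respect to the filtration F_t = σ(1_{z_i ∈ R_s}, s ≤ t). -/
/-!
The process `M_t = (n₀ - a(R_t)) / (1 - t)` is a martingale: given `ℱ_s`, the increment
`a(R_t) - a(R_s)` is binomial with mean `(n₀ - a(R_s)) (t - s) / (1 - s)`, so that
`E[n₀ - a(R_t) | ℱ_s] = (1 - t) M_s`. Hence, for `A ∈ ℱ_s`, both `E[1_A (a(R_t) - a(R_s))]` and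
`E[1_A ∫_s^t M_u du] = ∫_s^t E[1_A M_u] du` equal `(t - s) E[1_A M_s]`.
Since `(u, ω) ↦ a(R_u)(ω)` need not be jointly measurable, `E` and `∫ du` are interchanged through
left Riemann sums in `u`: these converge for every `ω`, as `u ↦ M_u(ω)` is a difference of monotone
functions, and dominated convergence applies to them.
-/

open MeasureTheory Set ProbabilityTheory Filter Topology

noncomputable def leftRiemannSum (g : ℝ → ℝ) (a b : ℝ) (n : ℕ) : ℝ :=
  (b - a) / n * ∑ i ∈ Finset.range n, g (a + (b - a) / n * i)

lemma add_div_mul_mem_Icc {a b : ℝ} (hab : a ≤ b) {n i : ℕ} (hi : i ≤ n) :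
    a + (b - a) / n * i ∈ Icc a b := by
  rcases Nat.eq_zero_or_pos n with rfl | hn
  · simp [hab]
  have hδ : 0 ≤ (b - a) / n := div_nonneg (sub_nonneg.2 hab) n.cast_nonneg
  refine ⟨le_add_of_nonneg_right (mul_nonneg hδ i.cast_nonneg), ?_⟩
  calc a + (b - a) / n * i ≤ a + (b - a) / n * n := by gcongr
    _ = b := by field_simp; ring

namespace MonotoneOn

variable {g : ℝ → ℝ} {a b : ℝ}

theorem leftRiemannSum_le_integral_and_integral_le (hab : a ≤ b) (hg : MonotoneOn g (Icc a b))
    {n : ℕ} (hn : n ≠ 0) :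
    leftRiemannSum g a b n ≤ ∫ x in a..b, g x ∧
      ∫ x in a..b, g x ≤ leftRiemannSum g a b n + (b - a) / n * (g b - g a) := by
  rcases hab.eq_or_lt with rfl | hlt
  · simp [leftRiemannSum]
  set δ := (b - a) / n with hδ
  have hδ0 : 0 < δ := div_pos (sub_pos.2 hlt) (by positivity)
  have hb : a + δ * n = b := by rw [hδ]; field_simp; ring
  have hh : MonotoneOn (fun x => g (a + δ * x)) (Icc 0 (0 + n)) := by
    intro x hx y hy hxy
    refine hg ?_ ?_ (by gcongr)
    · exact ⟨by nlinarith [hx.1], by nlinarith [hx.2]⟩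
    · exact ⟨by nlinarith [hy.1], by nlinarith [hy.2]⟩
  have hcomp : ∫ x in (0:ℝ)..n, g (a + δ * x) = δ⁻¹ * ∫ x in a..b, g x := by
    rw [intervalIntegral.integral_comp_add_mul _ hδ0.ne', smul_eq_mul, mul_zero, add_zero, hb]
  have hlow := hh.sum_le_integral
  have hup := hh.integral_le_sum
  simp only [zero_add, hcomp] at hlow hup
  have htel := Finset.sum_range_sub (fun i : ℕ => g (a + δ * i)) n
  rw [Finset.sum_sub_distrib] at htel
  simp only [Nat.cast_zero, mul_zero, add_zero, hb] at htel
  push_cast at hup htel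
  unfold leftRiemannSum
  rw [← hδ]
  constructor
  · have := mul_le_mul_of_nonneg_left hlow hδ0.le
    rwa [← mul_assoc, mul_inv_cancel₀ hδ0.ne', one_mul] at this
  · have := mul_le_mul_of_nonneg_left hup hδ0.le
    rw [← mul_assoc, mul_inv_cancel₀ hδ0.ne', one_mul] at this
    linear_combination this + δ * htel

theorem tendsto_leftRiemannSum (hab : a ≤ b) (hg : MonotoneOn g (Icc a b)) :
    Tendsto (leftRiemannSum g a b) atTop (𝓝 (∫ x in a..b, g x)) := by
  have hmesh : Tendsto (fun n : ℕ => (b - a) / n * (g b - g a)) atTop (𝓝 0) := by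
    simpa using (tendsto_const_div_atTop_nhds_zero_nat (b - a)).mul_const (g b - g a)
  refine tendsto_of_tendsto_of_tendsto_of_le_of_le' (by simpa using tendsto_const_nhds.sub hmesh)
    tendsto_const_nhds ?_ ?_
  all_goals filter_upwards [eventually_ne_atTop 0] with n hn
  · linarith [(hg.leftRiemannSum_le_integral_and_integral_le hab hn).2]
  · exact (hg.leftRiemannSum_le_integral_and_integral_le hab hn).1

end MonotoneOn

theorem abs_leftRiemannSum_le {g : ℝ → ℝ} {a b C : ℝ} (hab : a ≤ b)
    (hC : ∀ x ∈ Icc a b, |g x| ≤ C) (n : ℕ) : |leftRiemannSum g a b n| ≤ (b - a) * C := by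
  have hC0 : 0 ≤ C := (abs_nonneg _).trans (hC a ⟨le_rfl, hab⟩)
  rcases Nat.eq_zero_or_pos n with rfl | hn
  · simpa [leftRiemannSum] using mul_nonneg (sub_nonneg.2 hab) hC0
  have hsum : |∑ i ∈ Finset.range n, g (a + (b - a) / n * i)| ≤ n * C := by
    refine (Finset.abs_sum_le_sum_abs _ _).trans ?_
    simpa using Finset.sum_le_card_nsmul _ _ C fun i hi =>
      hC _ (add_div_mul_mem_Icc hab (Finset.mem_range.1 hi).le)
  rw [leftRiemannSum, abs_mul, abs_of_nonneg (div_nonneg (sub_nonneg.2 hab) n.cast_nonneg)]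
  calc (b - a) / n * |∑ i ∈ Finset.range n, g (a + (b - a) / n * i)|
      ≤ (b - a) / n * (n * C) := by gcongr
    _ = (b - a) * C := by field_simp

theorem tendsto_leftRiemannSum_sub_of_monotoneOn {g₁ g₂ : ℝ → ℝ} {a b : ℝ} (hab : a ≤ b)
    (hg₁ : MonotoneOn g₁ (Icc a b)) (hg₂ : MonotoneOn g₂ (Icc a b)) :
    Tendsto (leftRiemannSum (fun x => g₁ x - g₂ x) a b) atTop
      (𝓝 (∫ x in a..b, g₁ x - g₂ x)) := by
  have hsub : leftRiemannSum (fun x => g₁ x - g₂ x) a b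
      = fun n => leftRiemannSum g₁ a b n - leftRiemannSum g₂ a b n := by
    ext n
    simp only [leftRiemannSum, Finset.sum_sub_distrib, mul_sub]
  rw [hsub, intervalIntegral.integral_sub (hg₁.mono (uIcc_of_le hab).subset).intervalIntegrable
    (hg₂.mono (uIcc_of_le hab).subset).intervalIntegrable]
  exact (hg₁.tendsto_leftRiemannSum hab).sub (hg₂.tendsto_leftRiemannSum hab)

section Interchange

variable {Ω : Type*} {m : MeasurableSpace Ω} {g : ℝ → Ω → ℝ} {a b : ℝ}

theorem measurable_leftRiemannSum (hab : a ≤ b) (hmeas : ∀ u ∈ Icc a b, Measurable (g u))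
    (n : ℕ) : Measurable fun ω => leftRiemannSum (g · ω) a b n :=
  (Finset.measurable_sum _ fun _ hi =>
    hmeas _ (add_div_mul_mem_Icc hab (Finset.mem_range.1 hi).le)).const_mul _

theorem measurable_intervalIntegral_of_tendsto_leftRiemannSum (hab : a ≤ b)
    (hmeas : ∀ u ∈ Icc a b, Measurable (g u))
    (hR : ∀ ω, Tendsto (leftRiemannSum (g · ω) a b) atTop (𝓝 (∫ u in a..b, g u ω))) :
    Measurable fun ω => ∫ u in a..b, g u ω :=
  measurable_of_tendsto_metrizable (measurable_leftRiemannSum hab hmeas) (tendsto_pi_nhds.2 hR)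

theorem integral_intervalIntegral_comm_of_tendsto_leftRiemannSum {μ : Measure Ω} {F : Ω → ℝ}
    (hab : a ≤ b) (hmeas : ∀ u ∈ Icc a b, Measurable (g u)) (hF : Integrable F μ)
    (hbound : ∀ u ∈ Icc a b, ∀ ω, |g u ω| ≤ F ω)
    (hR : ∀ ω, Tendsto (leftRiemannSum (g · ω) a b) atTop (𝓝 (∫ u in a..b, g u ω)))
    (hRint : Tendsto (leftRiemannSum (fun u => ∫ ω, g u ω ∂μ) a b) atTop
      (𝓝 (∫ u in a..b, ∫ ω, g u ω ∂μ))) :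
    ∫ ω, (∫ u in a..b, g u ω) ∂μ = ∫ u in a..b, ∫ ω, g u ω ∂μ := by
  have hint : ∀ u ∈ Icc a b, Integrable (g u) μ := fun u hu =>
    hF.mono' (hmeas u hu).aestronglyMeasurable (ae_of_all _ (hbound u hu))
  have hsums : ∀ n, ∫ ω, leftRiemannSum (g · ω) a b n ∂μ
      = leftRiemannSum (fun u => ∫ ω, g u ω ∂μ) a b n := fun n => by
    simp only [leftRiemannSum]
    rw [integral_const_mul, integral_finsetSum _ fun i hi =>
      hint _ (add_div_mul_mem_Icc hab (Finset.mem_range.1 hi).le)]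
  have hlim : Tendsto (fun n => ∫ ω, leftRiemannSum (g · ω) a b n ∂μ) atTop
      (𝓝 (∫ ω, (∫ u in a..b, g u ω) ∂μ)) :=
    tendsto_integral_of_dominated_convergence (fun ω => (b - a) * F ω)
      (fun n => (measurable_leftRiemannSum hab hmeas n).aestronglyMeasurable)
      (hF.const_mul _)
      (fun n => ae_of_all _ fun ω => abs_leftRiemannSum_le hab (fun u hu => hbound u hu ω) n)
      (ae_of_all _ hR)
  simp only [hsums] at hlim
  exact tendsto_nhds_unique hlim hRint

end Interchange

theorem monotoneOn_div_one_sub {f : ℝ → ℝ} (hf : Monotone f) (hf0 : ∀ u, 0 ≤ f u) :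
    MonotoneOn (fun u => f u / (1 - u)) (Iio 1) := fun _ _ _ hv huv =>
  div_le_div₀ (hf0 _) (hf huv) (sub_pos.2 hv) (by linarith)

theorem abs_sub_div_one_sub_le {n x u b : ℝ} (hx0 : 0 ≤ x) (hxn : x ≤ n) (hub : u ≤ b)
    (hb : b < 1) : |(n - x) / (1 - u)| ≤ n / (1 - b) := by
  rw [abs_div, abs_of_nonneg (sub_nonneg.2 hxn), abs_of_pos (by linarith)]
  exact div_le_div₀ (by linarith) (by linarith) (by linarith) (by linarith)

theorem intervalIntegrable_sub_div_one_sub {f : ℝ → ℝ} (hf : Monotone f) {n a b : ℝ}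
    (ha : a < 1) (hb : b < 1) : IntervalIntegrable (fun u => (n - f u) / (1 - u)) volume a b := by
  simp only [div_eq_mul_inv]
  refine (intervalIntegrable_const.sub hf.intervalIntegrable).mul_continuousOn
    ((continuousOn_const.sub continuousOn_id).inv₀ fun u hu =>
      sub_ne_zero.2 (hu.2.trans_lt (max_lt ha hb)).ne')

theorem tendsto_leftRiemannSum_sub_div_one_sub {f : ℝ → ℝ} (hf : Monotone f) (hf0 : ∀ u, 0 ≤ f u)
    {n a b : ℝ} (hn : 0 ≤ n) (hab : a ≤ b) (hb : b < 1) :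
    Tendsto (leftRiemannSum (fun u => (n - f u) / (1 - u)) a b) atTop
      (𝓝 (∫ u in a..b, (n - f u) / (1 - u))) := by
  have hsub : Icc a b ⊆ Iio 1 := fun u hu => hu.2.trans_lt hb
  simp only [sub_div]
  exact tendsto_leftRiemannSum_sub_of_monotoneOn hab
    ((monotoneOn_div_one_sub monotone_const fun _ => hn).mono hsub)
    ((monotoneOn_div_one_sub hf hf0).mono hsub)

theorem sum_range_mul_choose_mul_pow_mul_pow {m N : ℕ} (hm : m ≤ N) (p : ℝ) :
    ∑ k ∈ Finset.range (N + 1), (k : ℝ) * (m.choose k * p ^ k * (1 - p) ^ (m - k)) = m * p := by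
  have hbern := congrArg (Polynomial.eval p) (bernsteinPolynomial.sum_smul ℝ m)
  simp only [Polynomial.eval_finsetSum, bernsteinPolynomial,
    Polynomial.eval_mul, Polynomial.eval_natCast, Polynomial.eval_pow, Polynomial.eval_sub,
    Polynomial.eval_one, Polynomial.eval_X, nsmul_eq_mul] at hbern
  rw [← hbern]
  refine (Finset.sum_subset (Finset.range_subset_range.2 (by omega)) fun k _ hk => ?_).symm
  rw [Nat.choose_eq_zero_of_lt (by simpa using hk)]
  simp

theorem integrable_natCast_of_le {Ω : Type*} {m0 : MeasurableSpace Ω} {μ : Measure Ω}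
    [IsFiniteMeasure μ] {X : Ω → ℕ} {N : ℕ} (hX : Measurable X) (hXN : ∀ ω, X ω ≤ N) :
    Integrable (fun ω => (X ω : ℝ)) μ :=
  Integrable.of_bound (measurable_from_top.comp hX).aestronglyMeasurable N
    (ae_of_all _ fun ω => by simpa using hXN ω)

theorem condExp_natCast_ae_eq_of_condBinomial {Ω : Type*} {m m0 : MeasurableSpace Ω}
    {μ : Measure Ω} [IsFiniteMeasure μ] {X M : Ω → ℕ} {N : ℕ} {p : ℝ} (hX : Measurable X)
    (hXN : ∀ ω, X ω ≤ N) (hMN : ∀ ω, M ω ≤ N)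
    (hlaw : ∀ k : ℕ, μ[fun ω => if X ω = k then (1 : ℝ) else 0 | m]
      =ᵐ[μ] fun ω => (M ω).choose k * p ^ k * (1 - p) ^ (M ω - k)) :
    μ[fun ω => (X ω : ℝ) | m] =ᵐ[μ] fun ω => M ω * p := by
  have hsum : (fun ω => (X ω : ℝ))
      = ∑ k ∈ Finset.range (N + 1), fun ω => (k : ℝ) * if X ω = k then 1 else 0 := by
    ext ω
    rw [Finset.sum_apply, Finset.sum_eq_single (X ω) (fun k _ hk => by simp [Ne.symm hk])
      (fun h => absurd (Finset.mem_range.2 (Nat.lt_succ_of_le (hXN ω))) h)]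
    simp
  have hind : ∀ k : ℕ, Integrable (fun ω => (k : ℝ) * if X ω = k then 1 else 0) μ := fun k =>
    (Integrable.of_bound (Measurable.ite (hX (measurableSet_singleton k)) measurable_const
      measurable_const).aestronglyMeasurable 1
      (ae_of_all _ fun ω => by split_ifs <;> simp)).const_mul _
  rw [hsum]
  refine (condExp_finsetSum (fun k _ => hind k) m).trans ?_
  have hterm : ∀ k : ℕ, μ[fun ω => (k : ℝ) * if X ω = k then 1 else 0 | m]
      =ᵐ[μ] fun ω => (k : ℝ) * ((M ω).choose k * p ^ k * (1 - p) ^ (M ω - k)) := fun k =>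
    (condExp_smul (k : ℝ) _ m).trans ((hlaw k).const_smul (k : ℝ))
  filter_upwards [ae_all_iff.2 hterm] with ω hω
  simp only [Finset.sum_apply, hω]
  exact sum_range_mul_choose_mul_pow_mul_pow (hMN ω) p

theorem martingale_of_setIntegral_eq {ι Ω E : Type*} [Preorder ι] {m0 : MeasurableSpace Ω}
    [NormedAddCommGroup E] [NormedSpace ℝ E] [CompleteSpace E]
    {μ : Measure Ω} [IsFiniteMeasure μ] {ℱ : Filtration ι m0} {f : ι → Ω → E}
    (hadp : StronglyAdapted ℱ f) (hint : ∀ i, Integrable (f i) μ)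
    (hf : ∀ i j, i ≤ j → ∀ A, MeasurableSet[ℱ i] A → ∫ ω in A, f i ω ∂μ = ∫ ω in A, f j ω ∂μ) :
    Martingale f ℱ μ :=
  ⟨hadp, fun i j hij => (ae_eq_condExp_of_forall_setIntegral_eq (ℱ.le i) (hint j)
    (fun _ _ _ => (hint i).integrableOn) (fun A hA _ => hf i j hij A hA)
    (hadp i).aestronglyMeasurable).symm⟩

def HasBinomialIncrements {Ω : Type*} {m0 : MeasurableSpace Ω} (μ : Measure Ω)
    (ℱ : Filtration (Ico (0 : ℝ) 1) m0) (n₀ : ℕ) (aR : ℝ → Ω → ℕ) : Prop :=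
  ∀ s t : Ico (0 : ℝ) 1, s ≤ t → ∀ k : ℕ,
    μ[(fun ω => if aR t ω - aR s ω = k then (1 : ℝ) else 0) | ℱ s]
      =ᵐ[μ] fun ω => ((n₀ - aR s ω).choose k : ℝ) * (((t : ℝ) - s) / (1 - s)) ^ k
        * (1 - ((t : ℝ) - s) / (1 - s)) ^ (n₀ - aR s ω - k)

section CountingProcess

variable {Ω : Type*} {n₀ : ℕ} {aR : ℝ → Ω → ℕ}

theorem measurable_compensator {m : MeasurableSpace Ω} (hmono : ∀ ω, Monotone (aR · ω))
    {a b : ℝ} (hab : a ≤ b) (hb : b < 1)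
    (hmeas : ∀ u ∈ Icc a b, Measurable fun ω => (aR u ω : ℝ)) :
    Measurable fun ω => ∫ u in a..b, ((n₀ : ℝ) - aR u ω) / (1 - u) :=
  measurable_intervalIntegral_of_tendsto_leftRiemannSum hab
    (fun u hu => ((hmeas u hu).const_sub _).div_const _) fun ω =>
    tendsto_leftRiemannSum_sub_div_one_sub (fun _ _ h => Nat.cast_le.2 (hmono ω h))
      (fun _ => Nat.cast_nonneg _) n₀.cast_nonneg hab hb

theorem integrable_compensator {m0 : MeasurableSpace Ω} {μ : Measure Ω} [IsFiniteMeasure μ]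
    (hbdd : ∀ t ω, aR t ω ≤ n₀) (hmono : ∀ ω, Monotone (aR · ω)) {a b : ℝ} (hab : a ≤ b)
    (hb : b < 1) (hmeas : ∀ u ∈ Icc a b, Measurable fun ω => (aR u ω : ℝ)) :
    Integrable (fun ω => ∫ u in a..b, ((n₀ : ℝ) - aR u ω) / (1 - u)) μ :=
  Integrable.of_bound (measurable_compensator hmono hab hb hmeas).aestronglyMeasurable
    (n₀ / (1 - b) * |b - a|) (ae_of_all _ fun ω =>
      intervalIntegral.norm_integral_le_of_norm_le_const fun u hu => by
        rw [uIoc_of_le hab] at hu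
        exact abs_sub_div_one_sub_le (Nat.cast_nonneg _) (by exact_mod_cast hbdd u ω) hu.2 hb)

variable {m0 : MeasurableSpace Ω} {ℱ : Filtration (Ico (0 : ℝ) 1) m0}

theorem measurable_count_of_le (hadapted : ∀ t : Ico (0 : ℝ) 1, Measurable[ℱ t] (aR t))
    {t : Ico (0 : ℝ) 1} {u : ℝ} (hu : u ∈ Icc 0 (t : ℝ)) :
    Measurable[ℱ t] fun ω => (aR u ω : ℝ) :=
  measurable_from_top.comp ((hadapted ⟨u, hu.1, hu.2.trans_lt t.2.2⟩).mono
    (ℱ.mono (Subtype.mk_le_mk.2 hu.2)) le_rfl)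

theorem stronglyAdapted_compensated (hmono : ∀ ω, Monotone (aR · ω))
    (hadapted : ∀ t : Ico (0 : ℝ) 1, Measurable[ℱ t] (aR t)) :
    StronglyAdapted ℱ fun (t : Ico (0 : ℝ) 1) ω =>
      (aR t ω : ℝ) - ∫ u in (0 : ℝ)..t, ((n₀ : ℝ) - aR u ω) / (1 - u) := fun t =>
  ((measurable_count_of_le hadapted ⟨t.2.1, le_rfl⟩).sub (measurable_compensator hmono t.2.1 t.2.2
    fun _ hu => measurable_count_of_le hadapted hu)).stronglyMeasurable

variable {μ : Measure Ω} [IsFiniteMeasure μ]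

theorem integrable_count (hbdd : ∀ t ω, aR t ω ≤ n₀)
    (hadapted : ∀ t : Ico (0 : ℝ) 1, Measurable[ℱ t] (aR t)) (t : Ico (0 : ℝ) 1) :
    Integrable (fun ω => (aR t ω : ℝ)) μ :=
  integrable_natCast_of_le ((hadapted t).mono (ℱ.le t) le_rfl) (hbdd t)

theorem integrable_compensated (hbdd : ∀ t ω, aR t ω ≤ n₀) (hmono : ∀ ω, Monotone (aR · ω))
    (hadapted : ∀ t : Ico (0 : ℝ) 1, Measurable[ℱ t] (aR t)) (t : Ico (0 : ℝ) 1) :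
    Integrable (fun ω => (aR t ω : ℝ) - ∫ u in (0 : ℝ)..t, ((n₀ : ℝ) - aR u ω) / (1 - u)) μ :=
  (integrable_count hbdd hadapted t).sub (integrable_compensator hbdd hmono t.2.1 t.2.2
    fun _ hu => (measurable_count_of_le hadapted hu).mono (ℱ.le t) le_rfl)

theorem setIntegral_increment_eq (hbdd : ∀ t ω, aR t ω ≤ n₀) (hmono : ∀ ω, Monotone (aR · ω))
    (hadapted : ∀ t : Ico (0 : ℝ) 1, Measurable[ℱ t] (aR t))
    (hbinom : HasBinomialIncrements μ ℱ n₀ aR) {s t : Ico (0 : ℝ) 1} (hst : s ≤ t) {A : Set Ω}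
    (hA : MeasurableSet[ℱ s] A) :
    ∫ ω in A, ((aR t ω : ℝ) - aR s ω) ∂μ
      = ((t : ℝ) - s) / (1 - s) * ∫ ω in A, ((n₀ : ℝ) - aR s ω) ∂μ := by
  have hX : Measurable fun ω => aR t ω - aR s ω :=
    ((hadapted t).mono (ℱ.le t) le_rfl).sub ((hadapted s).mono (ℱ.le s) le_rfl)
  have hXN : ∀ ω, aR t ω - aR s ω ≤ n₀ := fun ω => (Nat.sub_le _ _).trans (hbdd t ω)
  have hlaw := condExp_natCast_ae_eq_of_condBinomial (m := ℱ s) hX hXN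
    (fun ω => Nat.sub_le n₀ (aR s ω)) (hbinom s t hst)
  calc ∫ ω in A, ((aR t ω : ℝ) - aR s ω) ∂μ
      = ∫ ω in A, ((aR t ω - aR s ω : ℕ) : ℝ) ∂μ := by
        simp only [Nat.cast_sub (hmono _ (Subtype.coe_le_coe.2 hst))]
    _ = ∫ ω in A, ((n₀ - aR s ω : ℕ) : ℝ) * (((t : ℝ) - s) / (1 - s)) ∂μ := by
        rw [← setIntegral_condExp (ℱ.le s) (integrable_natCast_of_le hX hXN) hA]
        exact setIntegral_congr_ae (ℱ.le s A hA) (hlaw.mono fun ω h _ => h)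
    _ = _ := by simp only [Nat.cast_sub (hbdd _ _), integral_mul_const, mul_comm]

theorem martingale_uncounted_div_one_sub (hbdd : ∀ t ω, aR t ω ≤ n₀)
    (hmono : ∀ ω, Monotone (aR · ω)) (hadapted : ∀ t : Ico (0 : ℝ) 1, Measurable[ℱ t] (aR t))
    (hbinom : HasBinomialIncrements μ ℱ n₀ aR) :
    Martingale (fun (t : Ico (0 : ℝ) 1) ω => ((n₀ : ℝ) - aR t ω) / (1 - t)) ℱ μ := by
  have huncounted : ∀ t : Ico (0 : ℝ) 1, Integrable (fun ω => (n₀ : ℝ) - aR t ω) μ := fun t =>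
    (integrable_const _).sub (integrable_count hbdd hadapted t)
  refine martingale_of_setIntegral_eq
    (fun t => Measurable.stronglyMeasurable <|
      ((measurable_from_top.comp (hadapted t)).const_sub _).div_const _)
    (fun t => (huncounted t).div_const _) fun s t hst A hA => ?_
  have hincrement : Integrable (fun ω => (aR t ω : ℝ) - aR s ω) μ :=
    (integrable_count hbdd hadapted t).sub (integrable_count hbdd hadapted s)
  have hremaining : ∫ ω in A, ((n₀ : ℝ) - aR t ω) ∂μ
      = ∫ ω in A, ((n₀ : ℝ) - aR s ω) ∂μ - ∫ ω in A, ((aR t ω : ℝ) - aR s ω) ∂μ := by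
    rw [← integral_sub (huncounted s).integrableOn hincrement.integrableOn]
    simp only [sub_sub_sub_cancel_right]
  have hs : 1 - (s : ℝ) ≠ 0 := sub_ne_zero.2 s.2.2.ne'
  have ht : 1 - (t : ℝ) ≠ 0 := sub_ne_zero.2 t.2.2.ne'
  rw [integral_div, integral_div, hremaining,
    setIntegral_increment_eq hbdd hmono hadapted hbinom hst hA]
  field_simp
  ring

theorem setIntegral_compensator_eq (hbdd : ∀ t ω, aR t ω ≤ n₀)
    (hmono : ∀ ω, Monotone (aR · ω))
    (hadapted : ∀ t : Ico (0 : ℝ) 1, Measurable[ℱ t] (aR t))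
    (hM : Martingale (fun (t : Ico (0 : ℝ) 1) ω => ((n₀ : ℝ) - aR t ω) / (1 - t)) ℱ μ)
    {s t : Ico (0 : ℝ) 1} (hst : s ≤ t) {A : Set Ω} (hA : MeasurableSet[ℱ s] A) :
    ∫ ω in A, (∫ u in (s : ℝ)..t, ((n₀ : ℝ) - aR u ω) / (1 - u)) ∂μ
      = ∫ ω in A, ((aR t ω : ℝ) - aR s ω) ∂μ := by
  have hst' : (s : ℝ) ≤ t := hst
  set c := ∫ ω in A, ((n₀ : ℝ) - aR s ω) / (1 - s) ∂μ
  have hconst : ∀ u ∈ Icc (s : ℝ) t, ∫ ω in A, ((n₀ : ℝ) - aR u ω) / (1 - u) ∂μ = c :=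
    fun u hu => (hM.setIntegral_eq (j := ⟨u, s.2.1.trans hu.1, hu.2.trans_lt t.2.2⟩)
      hu.1 hA).symm
  have hremaining : ∀ u ∈ Icc (s : ℝ) t, ∫ ω in A, ((n₀ : ℝ) - aR u ω) ∂μ = (1 - u) * c :=
    fun u hu => by
      rw [← hconst u hu, integral_div, mul_div_cancel₀ _
        (sub_ne_zero.2 (hu.2.trans_lt t.2.2).ne')]
  have hmeas : ∀ u ∈ Icc (s : ℝ) t, Measurable fun ω => (aR u ω : ℝ) := fun u hu =>
    (measurable_count_of_le hadapted ⟨s.2.1.trans hu.1, hu.2⟩).mono (ℱ.le t) le_rfl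
  rw [integral_intervalIntegral_comm_of_tendsto_leftRiemannSum hst'
    (fun u hu => ((hmeas u hu).const_sub _).div_const _) (integrable_const (n₀ / (1 - t : ℝ)))
    (fun u hu ω => abs_sub_div_one_sub_le (Nat.cast_nonneg _) (by exact_mod_cast hbdd u ω)
      hu.2 t.2.2)
    (fun ω => tendsto_leftRiemannSum_sub_div_one_sub (fun _ _ h => Nat.cast_le.2 (hmono ω h))
      (fun _ => Nat.cast_nonneg _) n₀.cast_nonneg hst' t.2.2)
    (MonotoneOn.tendsto_leftRiemannSum hst' fun u hu v hv _ => by rw [hconst u hu, hconst v hv])]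
  rw [intervalIntegral.integral_congr fun u hu => hconst u ((uIcc_of_le hst') ▸ hu),
    intervalIntegral.integral_const, smul_eq_mul]
  have huncounted : ∀ u : Ico (0 : ℝ) 1, Integrable (fun ω => (n₀ : ℝ) - aR u ω) μ := fun u =>
    (integrable_const _).sub (integrable_count hbdd hadapted u)
  have hincrement : ∫ ω in A, ((aR t ω : ℝ) - aR s ω) ∂μ
      = ∫ ω in A, ((n₀ : ℝ) - aR s ω) ∂μ - ∫ ω in A, ((n₀ : ℝ) - aR t ω) ∂μ := by
    rw [← integral_sub (huncounted s).integrableOn (huncounted t).integrableOn]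
    simp only [sub_sub_sub_cancel_left]
  rw [hincrement, hremaining s ⟨le_rfl, hst'⟩, hremaining t ⟨hst', le_rfl⟩]
  ring

theorem setIntegral_compensated_eq (hbdd : ∀ t ω, aR t ω ≤ n₀)
    (hmono : ∀ ω, Monotone (aR · ω))
    (hadapted : ∀ t : Ico (0 : ℝ) 1, Measurable[ℱ t] (aR t))
    (hM : Martingale (fun (t : Ico (0 : ℝ) 1) ω => ((n₀ : ℝ) - aR t ω) / (1 - t)) ℱ μ)
    {s t : Ico (0 : ℝ) 1} (hst : s ≤ t) {A : Set Ω} (hA : MeasurableSet[ℱ s] A) :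
    ∫ ω in A, ((aR s ω : ℝ) - ∫ u in (0 : ℝ)..s, ((n₀ : ℝ) - aR u ω) / (1 - u)) ∂μ
      = ∫ ω in A, ((aR t ω : ℝ) - ∫ u in (0 : ℝ)..t, ((n₀ : ℝ) - aR u ω) / (1 - u)) ∂μ := by
  have hdiff : ∀ ω, ((aR t ω : ℝ) - ∫ u in (0 : ℝ)..t, ((n₀ : ℝ) - aR u ω) / (1 - u))
      - ((aR s ω : ℝ) - ∫ u in (0 : ℝ)..s, ((n₀ : ℝ) - aR u ω) / (1 - u))
      = ((aR t ω : ℝ) - aR s ω) - ∫ u in (s : ℝ)..t, ((n₀ : ℝ) - aR u ω) / (1 - u) := fun ω => by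
    have hf : Monotone fun u => (aR u ω : ℝ) := fun _ _ h => Nat.cast_le.2 (hmono ω h)
    rw [← intervalIntegral.integral_interval_sub_left
      (intervalIntegrable_sub_div_one_sub hf one_pos t.2.2)
      (intervalIntegrable_sub_div_one_sub hf one_pos s.2.2)]
    ring
  have hincrement : Integrable (fun ω => (aR t ω : ℝ) - aR s ω) μ :=
    (integrable_count hbdd hadapted t).sub (integrable_count hbdd hadapted s)
  have hcompensator := integrable_compensator (μ := μ) hbdd hmono hst t.2.2 fun _ hu =>
    (measurable_count_of_le (t := t) hadapted ⟨s.2.1.trans hu.1, hu.2⟩).mono (ℱ.le t) le_rfl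
  refine (sub_eq_zero.1 ?_).symm
  rw [← integral_sub (integrable_compensated hbdd hmono hadapted t).integrableOn
    (integrable_compensated hbdd hmono hadapted s).integrableOn]
  simp only [hdiff]
  rw [integral_sub hincrement.integrableOn hcompensator.integrableOn,
    setIntegral_compensator_eq hbdd hmono hadapted hM hst hA, sub_self]

end CountingProcess

/-- Let `aR t` count the null z-values in the nested stopping sets `R_t`
(with `F₀(R_t) = t`), adapted to the filtration `ℱ_t = σ(1_{z_i ∈ R_s}, s ≤ t)` so
that, conditionally on `ℱ_s`, the increment `aR t - aR s` has a Binomial distribution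
with parameters `n₀ - aR s` and `(t-s)/(1-s)`.  Then
`η_t = aR t − ∫₀^t (n₀ − aR s)/(1−s) ds` is a martingale with respect to `ℱ`. -/
theorem nested_counting_martingale
    {Ω : Type*} [m0 : MeasurableSpace Ω] (μ : Measure Ω) [IsProbabilityMeasure μ]
    (n₀ : ℕ)
    (aR : ℝ → Ω → ℕ)
    (hbdd : ∀ t ω, aR t ω ≤ n₀)
    (hmono : ∀ ω, ∀ s t : ℝ, s ≤ t → aR s ω ≤ aR t ω)
    (ℱ : Filtration (Set.Ico (0:ℝ) 1) m0)
    (hadapted : ∀ t : Set.Ico (0:ℝ) 1, Measurable[ℱ t] (aR (t : ℝ)))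
    (hbinom : ∀ s t : Set.Ico (0:ℝ) 1, s ≤ t → ∀ k : ℕ,
      μ[(fun ω => if aR t ω - aR s ω = k then (1:ℝ) else 0) | ℱ s]
        =ᵐ[μ] fun ω =>
          ((n₀ - aR s ω).choose k : ℝ) * (((t:ℝ) - s) / (1 - s)) ^ k
            * (1 - ((t:ℝ) - s) / (1 - s)) ^ (n₀ - aR s ω - k)) :
    Martingale
      (fun (t : Set.Ico (0:ℝ) 1) ω =>
        (aR t ω : ℝ) - ∫ s in (0:ℝ)..(t : ℝ), ((n₀ : ℝ) - aR s ω) / (1 - s))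
      ℱ μ := by
  have hM := martingale_uncounted_div_one_sub hbdd hmono hadapted hbinom
  exact martingale_of_setIntegral_eq (stronglyAdapted_compensated hmono hadapted)
    (integrable_compensated hbdd hmono hadapted) fun _ _ hst _ hA =>
      setIntegral_compensated_eq hbdd hmono hadapted hM hst hA
end

section
/- Let F̂_n be the empirical measure of n i.i.d. samples from F restricted to the nested sets Ω_t, and suppose g(t) = π₀F₀(Ω_t)/F(Ω_t) is continuous and strictly increasing with g(τ) = q. If τ_n^± solve π₀F₀(Ω_t) = qF(Ω_t) ± ε_n with ε_n → 0, then τ_n^+ → τ and τ_n^− → τ; consequently the empirical stopping index τ_n^{ABH}, which satisfies τ_n^− < τ_n^{ABH} < τ_n^+, converges in probability to τ. -/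
/-!
Since `π₀ F₀(Ω_t) = q F(Ω_t) ± ε_n` at `t = τ_n^±`, we get `g(τ_n^±) = q ± ε_n / F(Ω_{τ_n^±})`,
and nestedness gives `F(Ω_t) ≥ F(Ω_0) > 0`, so `g(τ_n^±) → q = g(τ)`. A strictly monotone
function on an interval pulls `g(x_n) → g(τ)` back to `x_n → τ`, hence `τ_n^± → τ`. Finally
`τ_n^{ABH}` is squeezed between `τ_n^−` and `τ_n^+` outside events of vanishing probability.
-/

open MeasureTheory Set Filter Topology

section StrictMonoOn

variable {ι α β : Type*} [LinearOrder α] [LinearOrder β] [TopologicalSpace β] [OrderTopology β]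
  {f : α → β} {s : Set α} {a : α} {l : Filter ι} {x : ι → α}

theorem StrictMonoOn.eventually_gt_of_tendsto_comp (hs : s.OrdConnected)
    (hf : StrictMonoOn f s) (ha : a ∈ s) (hx : ∀ᶠ i in l, x i ∈ s)
    (hfx : Tendsto (f ∘ x) l (𝓝 (f a))) {b : α} (hb : b < a) : ∀ᶠ i in l, b < x i := by
  by_cases hbs : b ∈ s
  · -- the gap `f b < f a` keeps `x i` above `b`
    filter_upwards [hx, hfx.eventually (lt_mem_nhds (hf hbs ha hb))] with i hxi hfxi
    exact (hf.lt_iff_lt hbs hxi).mp hfxi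
  · -- otherwise no point of the order-connected set `s ∋ a` lies below `b`
    filter_upwards [hx] with i hxi
    by_contra! hxb
    exact hbs (hs.out hxi ha ⟨hxb, hb.le⟩)

theorem StrictMonoOn.tendsto_of_tendsto_comp [TopologicalSpace α] [OrderTopology α]
    (hs : s.OrdConnected) (hf : StrictMonoOn f s) (ha : a ∈ s) (hx : ∀ᶠ i in l, x i ∈ s)
    (hfx : Tendsto (f ∘ x) l (𝓝 (f a))) : Tendsto x l (𝓝 a) :=
  tendsto_order.mpr
    ⟨fun _ => hf.eventually_gt_of_tendsto_comp hs ha hx hfx,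
      fun _ => hf.dual.eventually_gt_of_tendsto_comp (α := αᵒᵈ) (β := βᵒᵈ) hs.dual ha hx hfx⟩

end StrictMonoOn

theorem tendsto_div_zero_of_le {ι : Type*} {l : Filter ι} {e v : ι → ℝ} {c : ℝ} (hc : 0 < c)
    (hv : ∀ᶠ i in l, c ≤ v i) (he : Tendsto e l (𝓝 0)) :
    Tendsto (fun i => e i / v i) l (𝓝 0) := by
  refine squeeze_zero_norm' ?_ (by simpa using he.norm.div_const c)
  filter_upwards [hv] with i hvi
  rw [norm_div, Real.norm_of_nonneg (hc.trans_le hvi).le]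
  exact div_le_div_of_nonneg_left (norm_nonneg _) hc hvi

theorem tendsto_of_eq_mul_add_of_strictMonoOn {ι : Type*} {l : Filter ι} {s : Set ℝ}
    {g u v : ℝ → ℝ} {q c τ : ℝ} (hs : s.OrdConnected) (hgmono : StrictMonoOn g s)
    (hg : ∀ t ∈ s, g t = u t / v t) (hc : 0 < c) (hv : ∀ t ∈ s, c ≤ v t)
    (hτ : τ ∈ s) (hgτ : g τ = q) {x e : ι → ℝ} (hx : ∀ᶠ i in l, x i ∈ s)
    (he : Tendsto e l (𝓝 0)) (hxe : ∀ᶠ i in l, u (x i) = q * v (x i) + e i) :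
    Tendsto x l (𝓝 τ) := by
  have hgx : ∀ᶠ i in l, g (x i) = q + e i / v (x i) := by
    filter_upwards [hx, hxe] with i hxi hxei
    rw [hg _ hxi, hxei, add_div, mul_div_cancel_right₀ _ (hc.trans_le (hv _ hxi)).ne']
  refine hgmono.tendsto_of_tendsto_comp hs hτ hx ?_
  have hev : ∀ᶠ i in l, c ≤ v (x i) := hx.mono fun i hxi => hv _ hxi
  rw [hgτ, ← add_zero q]
  exact ((tendsto_div_zero_of_le hc hev he).const_add q).congr' (hgx.mono fun _ h => h.symm)

theorem tendstoInMeasure_const_of_measure_not_between {ι Ω : Type*} [MeasurableSpace Ω]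
    {μ : Measure Ω} {l : Filter ι} {T : ι → Ω → ℝ} {lo hi : ι → ℝ} {τ : ℝ}
    (hlo : Tendsto lo l (𝓝 τ)) (hhi : Tendsto hi l (𝓝 τ))
    (hbetween : Tendsto (fun i => μ {ω | ¬ (lo i < T i ω ∧ T i ω < hi i)}) l (𝓝 0)) :
    TendstoInMeasure μ T l (fun _ => τ) := by
  rw [tendstoInMeasure_iff_dist]
  intro δ hδ
  refine tendsto_of_tendsto_of_tendsto_of_le_of_le' tendsto_const_nhds hbetween
    (Eventually.of_forall fun _ => bot_le) ?_
  filter_upwards [hlo.eventually (lt_mem_nhds (sub_lt_self τ hδ)),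
    hhi.eventually (gt_mem_nhds (lt_add_of_pos_right τ hδ))] with i hloi hhii
  refine measure_mono fun ω hω ⟨hl, hr⟩ => ?_
  have hclose : dist (T i ω) τ < δ := by
    rw [Real.dist_eq, abs_lt]
    constructor <;> linarith
  exact hclose.not_ge hω

theorem empirical_stopping_index_converges_general
    {X : Type*} [MeasurableSpace X]
    {Ω' : Type*} [MeasurableSpace Ω'] (μ : Measure Ω')
    (F₀ F : Measure X)
    (Ωt : ℝ → Set X) (hnested : ∀ s t : ℝ, s ≤ t → Ωt s ⊆ Ωt t)
    (π₀ q : ℝ)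
    (hFpos : ∀ t ∈ Set.Icc (0:ℝ) 1, 0 < (F (Ωt t)).toReal)
    (g : ℝ → ℝ)
    (hg : ∀ t, g t = π₀ * (F₀ (Ωt t)).toReal / (F (Ωt t)).toReal)
    (hgmono : StrictMonoOn g (Set.Icc 0 1))
    (τ : ℝ) (hτmem : τ ∈ Set.Icc (0:ℝ) 1) (hgτ : g τ = q)
    (ε : ℕ → ℝ) (hε : Tendsto ε atTop (nhds 0))
    (τp τm : ℕ → ℝ)
    (hτpmem : ∀ n, τp n ∈ Set.Icc (0:ℝ) 1) (hτmmem : ∀ n, τm n ∈ Set.Icc (0:ℝ) 1)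
    (hτp : ∀ n, π₀ * (F₀ (Ωt (τp n))).toReal = q * (F (Ωt (τp n))).toReal + ε n)
    (hτm : ∀ n, π₀ * (F₀ (Ωt (τm n))).toReal = q * (F (Ωt (τm n))).toReal - ε n)
    (T : ℕ → Ω' → ℝ)
    (hbetween : Tendsto
      (fun n => μ {ω | ¬ (τm n < T n ω ∧ T n ω < τp n)}) atTop (nhds 0)) :
    Tendsto τp atTop (nhds τ) ∧ Tendsto τm atTop (nhds τ)
      ∧ TendstoInMeasure μ T atTop (fun _ => τ) := by
  have hFlb : ∀ t ∈ Icc (0:ℝ) 1, (F (Ωt 0)).toReal ≤ (F (Ωt t)).toReal := fun t ht =>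
    ENNReal.toReal_mono (ENNReal.toReal_pos_iff.mp (hFpos t ht)).2.ne
      (measure_mono (hnested 0 t ht.1))
  have hconv : ∀ x e : ℕ → ℝ, (∀ n, x n ∈ Icc (0:ℝ) 1) → Tendsto e atTop (𝓝 0) →
      (∀ n, π₀ * (F₀ (Ωt (x n))).toReal = q * (F (Ωt (x n))).toReal + e n) →
      Tendsto x atTop (𝓝 τ) := fun x e hx he hxe =>
    tendsto_of_eq_mul_add_of_strictMonoOn ordConnected_Icc hgmono (fun t _ => hg t)
      (hFpos 0 (left_mem_Icc.mpr zero_le_one)) hFlb hτmem hgτ (Eventually.of_forall hx) he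
      (Eventually.of_forall hxe)
  have hτp_lim : Tendsto τp atTop (𝓝 τ) := hconv τp ε hτpmem hε hτp
  have hτm_lim : Tendsto τm atTop (𝓝 τ) :=
    hconv τm (fun n => -ε n) hτmmem (by simpa using hε.neg) fun n => by
      simp [hτm n, sub_eq_add_neg]
  exact ⟨hτp_lim, hτm_lim,
    tendstoInMeasure_const_of_measure_not_between hτm_lim hτp_lim hbetween⟩

/-- Convergence of the empirical stopping index. Suppose
`g(t) = π₀ F₀(Ω_t) / F(Ω_t)` is continuous and strictly increasing on `[0,1]` with
`g(τ) = q`. If `τ_n^±` solve `π₀ F₀(Ω_t) = q F(Ω_t) ± ε_n` with `ε_n → 0`, then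
`τ_n^± → τ`; consequently the empirical stopping index `τ_n^{ABH}`, which lies in
`(τ_n^−, τ_n^+)` with probability tending to one, converges in probability to `τ`. -/
theorem empirical_stopping_index_converges
    {X : Type*} [MeasurableSpace X]
    {Ω' : Type*} [MeasurableSpace Ω'] (μ : Measure Ω') [IsProbabilityMeasure μ]
    (F₀ F : Measure X) [IsProbabilityMeasure F₀] [IsProbabilityMeasure F]
    (Ωt : ℝ → Set X) (hnested : ∀ s t : ℝ, s ≤ t → Ωt s ⊆ Ωt t)
    (π₀ q : ℝ) (hπ₀ : π₀ ∈ Set.Ioo (0:ℝ) 1) (hq : q ∈ Set.Ioo (0:ℝ) 1)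
    (hFpos : ∀ t ∈ Set.Icc (0:ℝ) 1, 0 < (F (Ωt t)).toReal)
    (g : ℝ → ℝ)
    (hg : ∀ t, g t = π₀ * (F₀ (Ωt t)).toReal / (F (Ωt t)).toReal)
    (hgcont : ContinuousOn g (Set.Icc 0 1))
    (hgmono : StrictMonoOn g (Set.Icc 0 1))
    (τ : ℝ) (hτmem : τ ∈ Set.Icc (0:ℝ) 1) (hgτ : g τ = q)
    (ε : ℕ → ℝ) (hεnonneg : ∀ n, 0 ≤ ε n) (hε : Tendsto ε atTop (nhds 0))
    (τp τm : ℕ → ℝ)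
    (hτpmem : ∀ n, τp n ∈ Set.Icc (0:ℝ) 1) (hτmmem : ∀ n, τm n ∈ Set.Icc (0:ℝ) 1)
    (hτp : ∀ n, π₀ * (F₀ (Ωt (τp n))).toReal = q * (F (Ωt (τp n))).toReal + ε n)
    (hτm : ∀ n, π₀ * (F₀ (Ωt (τm n))).toReal = q * (F (Ωt (τm n))).toReal - ε n)
    (T : ℕ → Ω' → ℝ)
    (hbetween : Tendsto
      (fun n => μ {ω | ¬ (τm n < T n ω ∧ T n ω < τp n)}) atTop (nhds 0)) :
    Tendsto τp atTop (nhds τ) ∧ Tendsto τm atTop (nhds τ)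
      ∧ TendstoInMeasure μ T atTop (fun _ => τ) :=
  empirical_stopping_index_converges_general μ F₀ F Ωt hnested π₀ q hFpos g hg hgmono τ hτmem hgτ ε
    hε τp τm hτpmem hτmmem hτp hτm T hbetween
end
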